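/- The Scott space ΣP₂ of the dcpo P₂ = (X × ℕ × ℕ) ∪ B ∪ {⊤₂} described in the context is sober. -/

import Mathlib

/-- A subset `D` is directed with respect to the relation `le`:
it is nonempty and any two elements have an upper bound in `D`. -/
def DirectedOn' {α : Type*} (le : α → α → Prop) (D : Set α) : Prop :=
  D.Nonempty ∧ ∀ x ∈ D, ∀ y ∈ D, ∃ z ∈ D, le x z ∧ le y z

/-- `u` is a least upper bound of `D` with respect to the relation `le`. -/
def IsLub' {α : Type*} (le : α → α → Prop) (D : Set α) (u : α) : Prop :=
  (∀ x ∈ D, le x u) ∧ ∀ v, (∀ x ∈ D, le x v) → le u v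

/-- Every directed subset has a least upper bound: `le` makes the carrier a dcpo. -/
def IsDcpoRel {α : Type*} (le : α → α → Prop) : Prop :=
  ∀ D : Set α, DirectedOn' le D → ∃ u, IsLub' le D u

/-- `U` is Scott open with respect to `le`: it is an upper set and every directed subset
whose least upper bound lies in `U` meets `U`. -/
def ScottOpen' {α : Type*} (le : α → α → Prop) (U : Set α) : Prop :=
  (∀ x y, le x y → x ∈ U → y ∈ U) ∧
    ∀ D u, DirectedOn' le D → IsLub' le D u → u ∈ U → (D ∩ U).Nonempty

/-- `A` is Scott closed with respect to `le`: it is a lower set and contains the least upper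
bounds of its directed subsets. -/
def ScottClosed' {α : Type*} (le : α → α → Prop) (A : Set α) : Prop :=
  (∀ x y, le x y → y ∈ A → x ∈ A) ∧
    ∀ D u, D ⊆ A → DirectedOn' le D → IsLub' le D u → u ∈ A

/-- Sobriety of the Scott space of `le`: the space is T₀ and every irreducible Scott closed
subset is the Scott closure `↓x = {y | le y x}` of a unique point `x`. -/
def SoberRel {α : Type*} (le : α → α → Prop) : Prop :=
  (∀ x y : α, (∀ U : Set α, ScottOpen' le U → (x ∈ U ↔ y ∈ U)) → x = y) ∧
    ∀ C : Set α, ScottClosed' le C → C.Nonempty →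
      (∀ A B : Set α, ScottClosed' le A → ScottClosed' le B → C ⊆ A ∪ B → C ⊆ A ∨ C ⊆ B) →
      ∃! x : α, C = {y | le y x}

/-! ### The posets `M`, `L`, `B`, `P₁`, `P₂` of Miao, Xi, Jia, Li, Zhao -/

/-- `ℕ^{<ℕ}`: nonempty finite words over `ℕ`. -/
abbrev NWord : Type := {l : List ℕ // l ≠ []}

/-- The prefix order on nonempty finite words. -/
def wordLE (v w : NWord) : Prop := v.1 <+: w.1

/-- The word of length 1 corresponding to a natural number. -/
def word1 (k : ℕ) : NWord := ⟨[k], by simp⟩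

/-- `s.k`: the word `s` extended by the letter `k`. -/
def wordSnoc (s : NWord) (k : ℕ) : NWord := ⟨s.1 ++ [k], by simp⟩

/-- The poset `M = ℕ ⊔ ℕ^{<ℕ}`, the disjoint sum of `ℕ` and the words. -/
abbrev Mt : Type := ℕ ⊕ NWord

/-- The (disjoint sum) order on `M`. -/
def Mle : Mt → Mt → Prop
  | Sum.inl a, Sum.inl b => a ≤ b
  | Sum.inr v, Sum.inr w => wordLE v w
  | _, _ => False

/-- The strict order on `M`. -/
def Mlt (x y : Mt) : Prop := Mle x y ∧ x ≠ y

/-- Pairs `(a, b)` of naturals with `a < b`. -/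
abbrev Pairt : Type := {p : ℕ × ℕ // p.1 < p.2}

/-- The poset `L = ({(a,b) : a < b} × M) ∪ {⊤}`; `none` is the top element `⊤` and
`some (p, x)` is the element `x_{a,b}` for `p = (a,b)`. -/
abbrev Lt : Type := Option (Pairt × Mt)

/-- The strict order on `L`: everything (other than `⊤`) is strictly below `⊤ = none`, and
`x_{a,b} < y_{a,b}` iff `x < y` in `M` (with the same tag `(a,b)`). -/
def Llt (u v : Lt) : Prop :=
  (u ≠ none ∧ v = none) ∨ ∃ p x y, u = some (p, x) ∧ v = some (p, y) ∧ Mlt x y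

/-- The carrier of the poset `B = ℕ × ℕ × L`. -/
abbrev Bt : Type := ℕ × ℕ × Lt

/-- `⊏₁`: `(m, n, ℓ) ⊏₁ (m, n, ℓ')` whenever `ℓ < ℓ'` in `L`. -/
def sq1 : Bt → Bt → Prop := fun x y =>
  ∃ m n u v, x = (m, n, u) ∧ y = (m, n, v) ∧ Llt u v

/-- `⊏₂`: `(a, n, x_{a,b}) ⊏₂ (f_{a,b}(x), n+1, ⊤)` for a word `x ∈ ℕ^{<ℕ}`. -/
def sq2 (f : Pairt → NWord → ℕ) : Bt → Bt → Prop := fun x y =>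
  ∃ (n : ℕ) (p : Pairt) (w : NWord),
    x = (p.1.1, n, some (p, Sum.inr w)) ∧ y = (f p w, n + 1, (none : Lt))

/-- `⊏₃`: `(b, n, x_{a,b}) ⊏₃ (f_{a,b}(x), n+1, ⊤)` for `x ∈ ℕ`, regarded as a word of
length 1. -/
def sq3 (f : Pairt → NWord → ℕ) : Bt → Bt → Prop := fun x y =>
  ∃ (n k : ℕ) (p : Pairt),
    x = (p.1.2, n, some (p, Sum.inl k)) ∧ y = (f p (word1 k), n + 1, (none : Lt))

/-- `⊏₄`: `(f_{a,b}(s), n, x_{a,b}) ⊏₄ (f_{a,b}(s.x), n, ⊤)` for a word `s` and `x ∈ ℕ`. -/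
def sq4 (f : Pairt → NWord → ℕ) : Bt → Bt → Prop := fun x y =>
  ∃ (n k : ℕ) (p : Pairt) (s : NWord),
    x = (f p s, n, some (p, Sum.inl k)) ∧ y = (f p (wordSnoc s k), n, (none : Lt))

/-- `⊏ = ⊏₁ ∪ ⊏₂ ∪ ⊏₃ ∪ ⊏₄ ∪ ⊏₁;⊏₂ ∪ ⊏₁;⊏₃ ∪ ⊏₁;⊏₄`. -/
def Bsq (f : Pairt → NWord → ℕ) : Bt → Bt → Prop := fun x y =>
  sq1 x y ∨ sq2 f x y ∨ sq3 f x y ∨ sq4 f x y ∨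
    (∃ z, sq1 x z ∧ sq2 f z y) ∨ (∃ z, sq1 x z ∧ sq3 f z y) ∨ (∃ z, sq1 x z ∧ sq4 f z y)

/-- The order `⊑` on `B`: the reflexive closure of `⊏`. -/
def Ble (f : Pairt → NWord → ℕ) (x y : Bt) : Prop := x = y ∨ Bsq f x y

/-- The hypotheses on the data `i`, `f`: `i` is an injection into `P(ℕ)` with pairwise
disjoint values satisfying `n < k` for all `k ∈ i (m, n)`, and each `f_{a,b}` is a monotone
injection of `ℕ^{<ℕ}` (with the prefix order) into `i (a, b)`. -/
structure IFData (i : Pairt → Set ℕ) (f : Pairt → NWord → ℕ) : Prop where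
  inj : Function.Injective i
  disj : ∀ p q : Pairt, p ≠ q → i p ∩ i q = ∅
  gt : ∀ p : Pairt, ∀ k ∈ i p, p.1.2 < k
  mem : ∀ p w, f p w ∈ i p
  finj : ∀ p, Function.Injective (f p)
  fmono : ∀ p v w, wordLE v w → f p v ≤ f p w

/-- `X = {g : ℕ → ⋃ₙ Eₙ : g(n) ∈ Eₙ}` where `Eₙ = i(φ(n))`. -/
def Xt (i : Pairt → Set ℕ) (φ : ℕ → Pairt) : Type := {g : ℕ → ℕ // ∀ n, g n ∈ i (φ n)}

/-- The carrier of the poset `P₂ = (X × ℕ × ℕ) ∪ B ∪ {⊤₂}`. -/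
abbrev P2t (i : Pairt → Set ℕ) (φ : ℕ → Pairt) : Type := (Xt i φ × ℕ × ℕ) ⊕ Bt ⊕ Unit

/-- The top element `⊤₂` of `P₂`. -/
def P2top (i : Pairt → Set ℕ) (φ : ℕ → Pairt) : P2t i φ := Sum.inr (Sum.inr ())

/-- The inclusion of `B` into `P₂`. -/
def P2ofB (i : Pairt → Set ℕ) (φ : ℕ → Pairt) (b : Bt) : P2t i φ := Sum.inr (Sum.inl b)

/-- The strict order `<₁ ∪ <₂ ∪ <₃ ∪ <₄ ∪ <₁;<₃` of `P₂`:
`(g, n, k) <₁ (g, m, k)` iff `n < m`; `<₂` is `⊏` on `B`; `(g, n, k) <₃ (g(n), k, ⊤)`;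
`x <₄ ⊤₂` for `x ≠ ⊤₂`; and `(g, n, k) <₁;<₃ (g(m), k, ⊤)` for `n < m`. -/
def P2lt (i : Pairt → Set ℕ) (φ : ℕ → Pairt) (f : Pairt → NWord → ℕ) :
    P2t i φ → P2t i φ → Prop := fun x y =>
  (∃ (g : Xt i φ) (n m k : ℕ), x = Sum.inl (g, n, k) ∧ y = Sum.inl (g, m, k) ∧ n < m) ∨
  (∃ b c : Bt, x = P2ofB i φ b ∧ y = P2ofB i φ c ∧ Bsq f b c) ∨
  (∃ (g : Xt i φ) (n k : ℕ), x = Sum.inl (g, n, k) ∧ y = P2ofB i φ (g.1 n, k, (none : Lt))) ∨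
  (x ≠ P2top i φ ∧ y = P2top i φ) ∨
  (∃ (g : Xt i φ) (n m k : ℕ), x = Sum.inl (g, n, k) ∧ n < m ∧
    y = P2ofB i φ (g.1 m, k, (none : Lt)))

/-- The order of `P₂`: the reflexive closure of the strict order. -/
def P2le (i : Pairt → Set ℕ) (φ : ℕ → Pairt) (f : Pairt → NWord → ℕ) (x y : P2t i φ) : Prop :=
  x = y ∨ P2lt i φ f x y



section Basic

/-! ### Words -/

lemma wordLE_refl (w : NWord) : wordLE w w := List.prefix_refl _

lemma wordLE_trans {u v w : NWord} (h : wordLE u v) (h' : wordLE v w) : wordLE u w :=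
  List.IsPrefix.trans h h'

lemma wordLE_antisymm {v w : NWord} (h : wordLE v w) (h' : wordLE w v) : v = w :=
  Subtype.ext (h.eq_of_length (le_antisymm h.length_le h'.length_le))

lemma wordLE_comparable {u v w : NWord} (h : wordLE u w) (h' : wordLE v w) :
    wordLE u v ∨ wordLE v u :=
  List.prefix_or_prefix_of_prefix h h'

lemma wordLE_snoc (s : NWord) (k : ℕ) : wordLE s (wordSnoc s k) :=
  List.prefix_append _ _

lemma wordLE_length {v w : NWord} (h : wordLE v w) : v.1.length ≤ w.1.length :=
  List.IsPrefix.length_le h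

lemma word_ne_snoc (s : NWord) (k : ℕ) : s ≠ wordSnoc s k := by
  intro h
  have := congrArg (fun w : NWord => w.1.length) h
  simp [wordSnoc] at this

lemma word_length_pos (w : NWord) : 0 < w.1.length :=
  List.length_pos_iff.2 w.2

/-- if `s ≤ s₀.K` for two distinct `K`, then `s ≤ s₀`. -/
lemma wordLE_of_le_snoc₂ {s s₀ : NWord} {K K' : ℕ} (hKK : K ≠ K')
    (h : wordLE s (wordSnoc s₀ K)) (h' : wordLE s (wordSnoc s₀ K')) : wordLE s s₀ := by
  rcases List.prefix_or_prefix_of_prefix h (List.prefix_append s₀.1 [K]) with h1 | h1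
  · exact h1
  · -- s₀.1 <+: s.1 and s.1 <+: s₀.1 ++ [K], s.1 <+: s₀.1 ++ [K']
    have hl : s.1.length ≤ s₀.1.length + 1 := by simpa [wordSnoc] using wordLE_length h
    rcases Nat.lt_or_ge s.1.length (s₀.1.length + 1) with hlt | hge
    · have : s.1.length ≤ s₀.1.length := by omega
      exact List.prefix_of_prefix_length_le h (List.prefix_append s₀.1 [K]) (by simpa [wordSnoc])
    · have h2 : s.1 = s₀.1 ++ [K] := h.eq_of_length (by simp [wordSnoc] at hl ⊢; omega)
      have h3 : s.1 = s₀.1 ++ [K'] := h'.eq_of_length (by simp [wordSnoc] at hl ⊢; omega)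
      exact absurd (by simpa using h2.symm.trans h3) hKK

/-- `word1 K ≤ w` and `word1 K' ≤ w` implies `K = K'`. -/
lemma word1_le_inj {K K' : ℕ} {w : NWord} (h : wordLE (word1 K) w) (h' : wordLE (word1 K') w) :
    K = K' := by
  rcases wordLE_comparable h h' with h1 | h1 <;>
  · have := h1.eq_of_length (by simp [word1])
    first
      | (simpa [word1] using this)
      | (symm; simpa [word1] using this)

/-! ### M -/

lemma mle_refl (x : Mt) : Mle x x := by
  cases x <;> simp [Mle, wordLE_refl]

lemma mle_trans {x y z : Mt} (h : Mle x y) (h' : Mle y z) : Mle x z := by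
  cases x <;> cases y <;> cases z <;> simp [Mle] at * <;> try omega
  exact wordLE_trans h h'

lemma mle_antisymm {x y : Mt} (h : Mle x y) (h' : Mle y x) : x = y := by
  cases x <;> cases y <;> simp [Mle] at * <;> first
    | omega
    | exact wordLE_antisymm h h'

lemma mlt_of_mlt_mle {x y z : Mt} (h : Mlt x y) (h' : Mle y z) : Mlt x z := by
  refine ⟨mle_trans h.1 h', ?_⟩
  rintro rfl
  exact h.2 (mle_antisymm h.1 h')

lemma mlt_of_mle_mlt {x y z : Mt} (h : Mle x y) (h' : Mlt y z) : Mlt x z := by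
  refine ⟨mle_trans h h'.1, ?_⟩
  rintro rfl
  exact h'.2 (mle_antisymm h'.1 h)

lemma mle_inl_inr {a : ℕ} {w : NWord} : ¬ Mle (Sum.inl a) (Sum.inr w) := by simp [Mle]
lemma mle_inr_inl {a : ℕ} {w : NWord} : ¬ Mle (Sum.inr w) (Sum.inl a) := by simp [Mle]

end Basic

section BsqLemmas

variable {f : Pairt → NWord → ℕ}

lemma llt_none_src {v : Lt} : ¬ Llt none v := by
  rintro (⟨h, _⟩ | ⟨p, x, y, h, _⟩) <;> simp at h

lemma bsq_none_src {m n : ℕ} {c : Bt} : ¬ Bsq f (m, n, (none : Lt)) c := by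
  rintro (⟨m', n', u, v, h1, h2, h3⟩ | ⟨n', p, w, h1, h2⟩ | ⟨n', k, p, h1, h2⟩ |
    ⟨n', k, p, s, h1, h2⟩ | ⟨z, ⟨m', n', u, v, h1, h2, h3⟩, h4⟩ |
    ⟨z, ⟨m', n', u, v, h1, h2, h3⟩, h4⟩ | ⟨z, ⟨m', n', u, v, h1, h2, h3⟩, h4⟩) <;>
  · simp only [Prod.mk.injEq] at h1
    first
      | (obtain ⟨-, -, rfl⟩ := h1; exact llt_none_src h3)
      | (exact absurd h1.2.2 (by simp))

lemma bsq_some_inv {m n : ℕ} {q : Pairt} {x : Mt} {c : Bt}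
    (h : Bsq f (m, n, (some (q, x) : Lt)) c) :
    (∃ y, c = (m, n, some (q, y)) ∧ Mlt x y) ∨ c = (m, n, (none : Lt)) ∨
    (∃ w w', x = Sum.inr w ∧ m = q.1.1 ∧ wordLE w w' ∧ c = (f q w', n+1, none)) ∨
    (∃ j K, x = Sum.inl j ∧ m = q.1.2 ∧ j ≤ K ∧ c = (f q (word1 K), n+1, none)) ∨
    (∃ j s K, x = Sum.inl j ∧ m = f q s ∧ j ≤ K ∧ c = (f q (wordSnoc s K), n, none)) := by
  rcases h with (⟨m', n', u, v, h1, h2, h3⟩ | ⟨n', p, w, h1, h2⟩ | ⟨n', k, p, h1, h2⟩ |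
    ⟨n', k, p, s, h1, h2⟩ | ⟨z, ⟨m', n', u, v, h1, h2, h3⟩, h4⟩ |
    ⟨z, ⟨m', n', u, v, h1, h2, h3⟩, h4⟩ | ⟨z, ⟨m', n', u, v, h1, h2, h3⟩, h4⟩)
  · -- sq1
    simp only [Prod.mk.injEq] at h1
    obtain ⟨rfl, rfl, rfl⟩ := h1
    rcases h3 with ⟨-, rfl⟩ | ⟨p, x', y, hu, rfl, hxy⟩
    · exact Or.inr (Or.inl h2)
    · simp only [Option.some.injEq, Prod.mk.injEq] at hu
      obtain ⟨rfl, rfl⟩ := hu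
      exact Or.inl ⟨y, h2, hxy⟩
  · -- sq2
    simp only [Prod.mk.injEq, Option.some.injEq] at h1
    obtain ⟨h1a, rfl, rfl, rfl⟩ := h1
    exact Or.inr <| Or.inr <| Or.inl ⟨w, w, rfl, h1a, wordLE_refl w, h2⟩
  · -- sq3
    simp only [Prod.mk.injEq, Option.some.injEq] at h1
    obtain ⟨h1a, rfl, rfl, rfl⟩ := h1
    exact Or.inr <| Or.inr <| Or.inr <| Or.inl ⟨k, k, rfl, h1a, le_rfl, h2⟩
  · -- sq4
    simp only [Prod.mk.injEq, Option.some.injEq] at h1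
    obtain ⟨h1a, rfl, rfl, rfl⟩ := h1
    exact Or.inr <| Or.inr <| Or.inr <| Or.inr ⟨k, s, k, rfl, h1a, le_rfl, h2⟩
  · -- sq1 ; sq2
    simp only [Prod.mk.injEq] at h1
    obtain ⟨rfl, rfl, rfl⟩ := h1
    obtain ⟨n'', p, w, hz, hc⟩ := h4
    subst h2
    simp only [Prod.mk.injEq] at hz
    obtain ⟨hm, rfl, rfl⟩ := hz
    rcases h3 with ⟨-, h⟩ | ⟨p', x', y, hu, hv, hxy⟩
    · simp at h
    · simp only [Option.some.injEq, Prod.mk.injEq] at hu hv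
      obtain ⟨rfl, rfl⟩ := hu
      obtain ⟨rfl, rfl⟩ := hv
      obtain ⟨w₀, rfl⟩ : ∃ w₀, x = Sum.inr w₀ := by
        rcases x with a | w₀
        · exact absurd hxy.1 mle_inl_inr
        · exact ⟨w₀, rfl⟩
      exact Or.inr <| Or.inr <| Or.inl ⟨w₀, w, rfl, hm, by simpa [Mle] using hxy.1, hc⟩
  · -- sq1 ; sq3
    simp only [Prod.mk.injEq] at h1
    obtain ⟨rfl, rfl, rfl⟩ := h1
    obtain ⟨n'', k, p, hz, hc⟩ := h4
    subst h2
    simp only [Prod.mk.injEq] at hz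
    obtain ⟨hm, rfl, rfl⟩ := hz
    rcases h3 with ⟨-, h⟩ | ⟨p', x', y, hu, hv, hxy⟩
    · simp at h
    · simp only [Option.some.injEq, Prod.mk.injEq] at hu hv
      obtain ⟨rfl, rfl⟩ := hu
      obtain ⟨rfl, rfl⟩ := hv
      obtain ⟨j, rfl⟩ : ∃ j, x = Sum.inl j := by
        rcases x with j | w₀
        · exact ⟨j, rfl⟩
        · exact absurd hxy.1 mle_inr_inl
      exact Or.inr <| Or.inr <| Or.inr <| Or.inl ⟨j, k, rfl, hm, by simpa [Mle] using hxy.1, hc⟩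
  · -- sq1 ; sq4
    simp only [Prod.mk.injEq] at h1
    obtain ⟨rfl, rfl, rfl⟩ := h1
    obtain ⟨n'', k, p, s, hz, hc⟩ := h4
    subst h2
    simp only [Prod.mk.injEq] at hz
    obtain ⟨hm, rfl, rfl⟩ := hz
    rcases h3 with ⟨-, h⟩ | ⟨p', x', y, hu, hv, hxy⟩
    · simp at h
    · simp only [Option.some.injEq, Prod.mk.injEq] at hu hv
      obtain ⟨rfl, rfl⟩ := hu
      obtain ⟨rfl, rfl⟩ := hv
      obtain ⟨j, rfl⟩ : ∃ j, x = Sum.inl j := by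
        rcases x with j | w₀
        · exact ⟨j, rfl⟩
        · exact absurd hxy.1 mle_inr_inl
      exact Or.inr <| Or.inr <| Or.inr <| Or.inr ⟨j, s, k, rfl, hm, by simpa [Mle] using hxy.1, hc⟩

lemma bsq_sq1 {m n : ℕ} {q : Pairt} {x y : Mt} (h : Mlt x y) :
    Bsq f (m, n, (some (q, x) : Lt)) (m, n, (some (q, y) : Lt)) :=
  Or.inl ⟨m, n, _, _, rfl, rfl, Or.inr ⟨q, x, y, rfl, rfl, h⟩⟩

lemma bsq_tonone {m n : ℕ} {q : Pairt} {x : Mt} :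
    Bsq f (m, n, (some (q, x) : Lt)) (m, n, (none : Lt)) :=
  Or.inl ⟨m, n, _, _, rfl, rfl, Or.inl ⟨by simp, rfl⟩⟩

lemma bsq_sq2' {q : Pairt} {n : ℕ} {w w' : NWord} (h : wordLE w w') :
    Bsq f (q.1.1, n, (some (q, Sum.inr w) : Lt)) (f q w', n + 1, (none : Lt)) := by
  by_cases hw : w = w'
  · subst hw
    exact Or.inr <| Or.inl ⟨n, q, w, rfl, rfl⟩
  · refine Or.inr <| Or.inr <| Or.inr <| Or.inr <| Or.inl
      ⟨(q.1.1, n, (some (q, Sum.inr w') : Lt)), ?_, ?_⟩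
    · exact ⟨q.1.1, n, _, _, rfl, rfl, Or.inr ⟨q, _, _, rfl, rfl, ⟨h, by simp [hw]⟩⟩⟩
    · exact ⟨n, q, w', rfl, rfl⟩

lemma bsq_sq3' {q : Pairt} {n j K : ℕ} (h : j ≤ K) :
    Bsq f (q.1.2, n, (some (q, Sum.inl j) : Lt)) (f q (word1 K), n + 1, (none : Lt)) := by
  rcases eq_or_lt_of_le h with rfl | hlt
  · exact Or.inr <| Or.inr <| Or.inl ⟨n, j, q, rfl, rfl⟩
  · refine Or.inr <| Or.inr <| Or.inr <| Or.inr <| Or.inr <| Or.inl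
      ⟨(q.1.2, n, (some (q, Sum.inl K) : Lt)), ?_, ?_⟩
    · exact ⟨q.1.2, n, _, _, rfl, rfl, Or.inr ⟨q, _, _, rfl, rfl, ⟨Nat.le_of_lt hlt, by simp; omega⟩⟩⟩
    · exact ⟨n, K, q, rfl, rfl⟩

lemma bsq_sq4' {q : Pairt} {n j K : ℕ} {s : NWord} (h : j ≤ K) :
    Bsq f (f q s, n, (some (q, Sum.inl j) : Lt)) (f q (wordSnoc s K), n, (none : Lt)) := by
  rcases eq_or_lt_of_le h with rfl | hlt
  · exact Or.inr <| Or.inr <| Or.inr <| Or.inl ⟨n, j, q, s, rfl, rfl⟩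
  · refine Or.inr <| Or.inr <| Or.inr <| Or.inr <| Or.inr <| Or.inr
      ⟨(f q s, n, (some (q, Sum.inl K) : Lt)), ?_, ?_⟩
    · exact ⟨f q s, n, _, _, rfl, rfl, Or.inr ⟨q, _, _, rfl, rfl, ⟨Nat.le_of_lt hlt, by simp; omega⟩⟩⟩
    · exact ⟨n, K, q, s, rfl, rfl⟩

end BsqLemmas

section BsqTrans

variable {f : Pairt → NWord → ℕ}

lemma mlt_inr_inv {x : Mt} {w : NWord} (h : Mlt x (Sum.inr w)) :
    ∃ w₀, x = Sum.inr w₀ ∧ wordLE w₀ w := by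
  rcases x with a | w₀
  · exact absurd h.1 mle_inl_inr
  · exact ⟨w₀, rfl, by simpa [Mle] using h.1⟩

lemma mlt_inl_inv {x : Mt} {j : ℕ} (h : Mlt x (Sum.inl j)) :
    ∃ j₀, x = Sum.inl j₀ ∧ j₀ ≤ j := by
  rcases x with j₀ | w₀
  · exact ⟨j₀, rfl, by simpa [Mle] using h.1⟩
  · exact absurd h.1 mle_inr_inl

lemma bsq_trans {a b c : Bt} (h1 : Bsq f a b) (h2 : Bsq f b c) : Bsq f a c := by
  obtain ⟨m, n, u⟩ := a
  cases u with
  | none => exact absurd h1 bsq_none_src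
  | some pz =>
    obtain ⟨q, x⟩ := pz
    rcases bsq_some_inv h1 with ⟨y, rfl, hxy⟩ | rfl | ⟨w, w', -, -, -, rfl⟩ |
      ⟨j, K, -, -, -, rfl⟩ | ⟨j, s, K, -, -, -, rfl⟩
    · rcases bsq_some_inv h2 with ⟨z, rfl, hyz⟩ | rfl | ⟨w, w', hy, hm, hww, rfl⟩ |
        ⟨j, K, hy, hm, hjK, rfl⟩ | ⟨j, s, K, hy, hm, hjK, rfl⟩
      · exact bsq_sq1 (mlt_of_mlt_mle hxy hyz.1)
      · exact bsq_tonone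
      · subst hy hm
        obtain ⟨w₀, rfl, hw₀⟩ := mlt_inr_inv hxy
        exact bsq_sq2' (wordLE_trans hw₀ hww)
      · subst hy hm
        obtain ⟨j₀, rfl, hj₀⟩ := mlt_inl_inv hxy
        exact bsq_sq3' (le_trans hj₀ hjK)
      · subst hy hm
        obtain ⟨j₀, rfl, hj₀⟩ := mlt_inl_inv hxy
        exact bsq_sq4' (le_trans hj₀ hjK)
    all_goals exact absurd h2 bsq_none_src

lemma bsq_irrefl {b : Bt} : ¬ Bsq f b b := by
  obtain ⟨m, n, u⟩ := b
  cases u with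
  | none => exact bsq_none_src
  | some pz =>
    obtain ⟨q, x⟩ := pz
    intro h
    rcases bsq_some_inv h with ⟨y, hy, hxy⟩ | h' | ⟨w, w', -, -, -, h'⟩ |
      ⟨j, K, -, -, -, h'⟩ | ⟨j, s, K, -, -, -, h'⟩
    · simp only [Prod.mk.injEq, Option.some.injEq] at hy
      exact hxy.2 hy.2.2.2
    all_goals simp at h'

end BsqTrans

section P2Order

variable {i : Pairt → Set ℕ} {φ : ℕ → Pairt} {f : Pairt → NWord → ℕ}

lemma p2lt_top_src {x : P2t i φ} : ¬ P2lt i φ f (P2top i φ) x := by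
  rintro (⟨g, n, m, k, h, -⟩ | ⟨b, c, h, -⟩ | ⟨g, n, k, h, -⟩ | ⟨h, rfl⟩ | ⟨g, n, m, k, h, -⟩)
  · simp [P2top] at h
  · simp [P2top, P2ofB] at h
  · simp [P2top] at h
  · exact h rfl
  · simp [P2top] at h

lemma p2le_top_inv {x : P2t i φ} (h : P2le i φ f (P2top i φ) x) : x = P2top i φ := by
  rcases h with rfl | h
  · rfl
  · exact absurd h p2lt_top_src

lemma p2le_top (x : P2t i φ) : P2le i φ f x (P2top i φ) := by
  by_cases hx : x = P2top i φ
  · exact Or.inl hx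
  · exact Or.inr (Or.inr <| Or.inr <| Or.inr <| Or.inl ⟨hx, rfl⟩)

lemma p2lt_inX_inv {g : Xt i φ} {n k : ℕ} {c : P2t i φ}
    (h : P2lt i φ f (Sum.inl (g, n, k)) c) :
    (∃ m, n < m ∧ c = Sum.inl (g, m, k)) ∨
    (∃ m, n ≤ m ∧ c = P2ofB i φ (g.1 m, k, (none : Lt))) ∨ c = P2top i φ := by
  rcases h with ⟨g', n', m, k', h1, h2, h3⟩ | ⟨b, c', h1, -⟩ | ⟨g', n', k', h1, h2⟩ |
    ⟨-, rfl⟩ | ⟨g', n', m, k', h1, h2, h3⟩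
  · simp only [Sum.inl.injEq, Prod.mk.injEq] at h1
    obtain ⟨rfl, rfl, rfl⟩ := h1
    exact Or.inl ⟨m, h3, h2⟩
  · simp [P2ofB] at h1
  · simp only [Sum.inl.injEq, Prod.mk.injEq] at h1
    obtain ⟨rfl, rfl, rfl⟩ := h1
    exact Or.inr (Or.inl ⟨n, le_rfl, h2⟩)
  · exact Or.inr (Or.inr rfl)
  · simp only [Sum.inl.injEq, Prod.mk.injEq] at h1
    obtain ⟨rfl, rfl, rfl⟩ := h1
    exact Or.inr (Or.inl ⟨m, Nat.le_of_lt h2, h3⟩)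

lemma p2lt_inB_inv {b : Bt} {c : P2t i φ} (h : P2lt i φ f (P2ofB i φ b) c) :
    (∃ b', c = P2ofB i φ b' ∧ Bsq f b b') ∨ c = P2top i φ := by
  rcases h with ⟨g', n', m, k', h1, -, -⟩ | ⟨b', c', h1, h2, h3⟩ | ⟨g', n', k', h1, -⟩ |
    ⟨-, rfl⟩ | ⟨g', n', m, k', h1, -, -⟩
  · simp [P2ofB] at h1
  · simp only [P2ofB, Sum.inr.injEq, Sum.inl.injEq] at h1
    subst h1
    exact Or.inl ⟨c', h2, h3⟩
  · simp [P2ofB] at h1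
  · exact Or.inr rfl
  · simp [P2ofB] at h1

lemma p2lt_X_mono {g : Xt i φ} {n m k : ℕ} (h : n < m) :
    P2lt i φ f (Sum.inl (g, n, k)) (Sum.inl (g, m, k)) :=
  Or.inl ⟨g, n, m, k, rfl, rfl, h⟩

lemma p2le_X_none {g : Xt i φ} {n m k : ℕ} (h : n ≤ m) :
    P2le i φ f (Sum.inl (g, n, k)) (P2ofB i φ (g.1 m, k, (none : Lt))) := by
  rcases eq_or_lt_of_le h with rfl | hlt
  · exact Or.inr <| Or.inr <| Or.inr <| Or.inl ⟨g, n, k, rfl, rfl⟩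
  · exact Or.inr <| Or.inr <| Or.inr <| Or.inr <| Or.inr ⟨g, n, m, k, rfl, hlt, rfl⟩

lemma p2lt_ofBsq {b c : Bt} (h : Bsq f b c) : P2lt i φ f (P2ofB i φ b) (P2ofB i φ c) :=
  Or.inr (Or.inl ⟨b, c, rfl, rfl, h⟩)

lemma p2le_ofBsq {b c : Bt} (h : Bsq f b c) :
    P2le i φ f (P2ofB i φ b) (P2ofB i φ c) := Or.inr (p2lt_ofBsq h)

lemma inX_ne_top {g : Xt i φ} {n k : ℕ} : (Sum.inl (g, n, k) : P2t i φ) ≠ P2top i φ := by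
  simp [P2top]

lemma inB_ne_top {b : Bt} : (P2ofB i φ b) ≠ P2top i φ := by
  simp [P2top, P2ofB]

lemma p2lt_trans' {x y z : P2t i φ} (h1 : P2lt i φ f x y) (h2 : P2lt i φ f y z) :
    P2lt i φ f x z := by
  rcases x with ⟨g, n, k⟩ | b | u
  · rcases p2lt_inX_inv h1 with ⟨m, hnm, rfl⟩ | ⟨m, hnm, rfl⟩ | rfl
    · rcases p2lt_inX_inv h2 with ⟨m', hmm', rfl⟩ | ⟨m', hmm', rfl⟩ | rfl
      · exact p2lt_X_mono (lt_trans hnm hmm')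
      · exact Or.inr <| Or.inr <| Or.inr <| Or.inr
          ⟨g, n, m', k, rfl, lt_of_lt_of_le hnm hmm', rfl⟩
      · exact Or.inr <| Or.inr <| Or.inr <| Or.inl ⟨inX_ne_top, rfl⟩
    · rcases p2lt_inB_inv h2 with ⟨b', -, hb⟩ | rfl
      · exact absurd hb bsq_none_src
      · exact Or.inr <| Or.inr <| Or.inr <| Or.inl ⟨inX_ne_top, rfl⟩
    · exact absurd h2 p2lt_top_src
  · rcases p2lt_inB_inv (b := b) h1 with ⟨b', rfl, hb⟩ | rfl
    · rcases p2lt_inB_inv h2 with ⟨b'', rfl, hb'⟩ | rfl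
      · exact p2lt_ofBsq (bsq_trans hb hb')
      · exact Or.inr <| Or.inr <| Or.inr <| Or.inl ⟨inB_ne_top, rfl⟩
    · exact absurd h2 p2lt_top_src
  · cases u
    exact absurd h1 p2lt_top_src

lemma p2lt_irrefl {x : P2t i φ} : ¬ P2lt i φ f x x := by
  rintro (⟨g, n, m, k, h1, h2, h3⟩ | ⟨b, c, h1, h2, h3⟩ | ⟨g, n, k, h1, h2⟩ |
    ⟨h, rfl⟩ | ⟨g, n, m, k, h1, h2, h3⟩)
  · rw [h1] at h2
    simp only [Sum.inl.injEq, Prod.mk.injEq] at h2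
    omega
  · rw [h1] at h2
    simp only [P2ofB, Sum.inr.injEq, Sum.inl.injEq] at h2
    subst h2
    exact bsq_irrefl h3
  · rw [h1] at h2
    simp [P2ofB] at h2
  · exact h rfl
  · rw [h1] at h3
    simp [P2ofB] at h3

lemma p2le_refl (x : P2t i φ) : P2le i φ f x x := Or.inl rfl

lemma p2le_trans {x y z : P2t i φ} (h1 : P2le i φ f x y) (h2 : P2le i φ f y z) :
    P2le i φ f x z := by
  rcases h1 with rfl | h1
  · exact h2
  · rcases h2 with rfl | h2
    · exact Or.inr h1
    · exact Or.inr (p2lt_trans' h1 h2)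

lemma p2le_antisymm {x y : P2t i φ} (h1 : P2le i φ f x y) (h2 : P2le i φ f y x) : x = y := by
  rcases h1 with rfl | h1
  · rfl
  · rcases h2 with rfl | h2
    · rfl
    · exact absurd (p2lt_trans' h1 h2) p2lt_irrefl

end P2Order

section DataFacts

variable {i : Pairt → Set ℕ} {f : Pairt → NWord → ℕ} {φ : ℕ → Pairt}

lemma IFData.f_gt_b (hif : IFData i f) (q : Pairt) (w : NWord) : q.1.2 < f q w :=
  hif.gt q _ (hif.mem q w)

lemma IFData.f_gt_a (hif : IFData i f) (q : Pairt) (w : NWord) : q.1.1 < f q w :=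
  lt_trans q.2 (hif.f_gt_b q w)

lemma IFData.class_unique (hif : IFData i f) {m : ℕ} {q q' : Pairt}
    (h : m ∈ i q) (h' : m ∈ i q') : q = q' := by
  by_contra hne
  have := hif.disj q q' hne
  exact absurd (Set.mem_inter h h') (by rw [this]; exact Set.notMem_empty m)

lemma IFData.f_inj2 (hif : IFData i f) {q q' : Pairt} {w w' : NWord}
    (h : f q w = f q' w') : q = q' ∧ w = w' := by
  have hq : q = q' := hif.class_unique (hif.mem q w) (h ▸ hif.mem q' w')
  subst hq
  exact ⟨rfl, hif.finj q h⟩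

lemma word1_inj {K K' : ℕ} (h : word1 K = word1 K') : K = K' := by
  simpa [word1] using congrArg (fun w : NWord => w.1) h

lemma wordSnoc_inj_right {s : NWord} {K K' : ℕ} (h : wordSnoc s K = wordSnoc s K') : K = K' := by
  have := congrArg (fun w : NWord => w.1) h
  simpa [wordSnoc] using this

lemma wordSnoc_ne_word1 {s : NWord} {K K' : ℕ} : wordSnoc s K ≠ word1 K' := by
  intro h
  have h2 := congrArg (fun w : NWord => w.1.length) h
  have h3 : s.1.length + 1 = 1 := by simpa [wordSnoc, word1] using h2
  have := word_length_pos s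
  omega

lemma Xt.inj (hif : IFData i f) (hφ : Function.Bijective φ) (g : Xt i φ) {a b : ℕ}
    (h : g.1 a = g.1 b) : a = b := by
  by_contra hne
  have hφne : φ a ≠ φ b := fun hh => hne (hφ.1 hh)
  have := hif.disj _ _ hφne
  exact absurd (Set.mem_inter (g.2 a) (h ▸ g.2 b)) (by rw [this]; exact Set.notMem_empty _)

end DataFacts

section ShapeLemmas

variable {i : Pairt → Set ℕ} {φ : ℕ → Pairt} {f : Pairt → NWord → ℕ}

lemma pB_inj {b b' : Bt} (h : P2ofB i φ b = P2ofB i φ b') : b = b' := by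
  simpa [P2ofB] using h

lemma pB_ne_inX {b : Bt} {g : Xt i φ} {n k : ℕ} : P2ofB i φ b ≠ Sum.inl (g, n, k) := by
  simp [P2ofB]

lemma p2le_pB_inX {b : Bt} {g : Xt i φ} {n k : ℕ} :
    ¬ P2le i φ f (P2ofB i φ b) (Sum.inl (g, n, k)) := by
  rintro (h | h)
  · exact pB_ne_inX h
  · rcases p2lt_inB_inv h with ⟨b', h', -⟩ | h'
    · exact pB_ne_inX h'.symm
    · simp [P2top] at h'

lemma p2le_noneB_inv {m n : ℕ} {c : P2t i φ}
    (h : P2le i φ f (P2ofB i φ (m, n, (none : Lt))) c) :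
    c = P2ofB i φ (m, n, (none : Lt)) ∨ c = P2top i φ := by
  rcases h with rfl | h
  · exact Or.inl rfl
  · rcases p2lt_inB_inv h with ⟨b', h', hb⟩ | h'
    · exact absurd hb bsq_none_src
    · exact Or.inr h'

lemma p2le_X_mono {g : Xt i φ} {n m k : ℕ} (h : n ≤ m) :
    P2le i φ f (Sum.inl (g, n, k)) (Sum.inl (g, m, k)) := by
  rcases eq_or_lt_of_le h with rfl | hlt
  · exact Or.inl rfl
  · exact Or.inr (p2lt_X_mono hlt)

lemma p2le_inX_inv {g : Xt i φ} {n k : ℕ} {c : P2t i φ}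
    (h : P2le i φ f (Sum.inl (g, n, k)) c) :
    (∃ m, n ≤ m ∧ c = Sum.inl (g, m, k)) ∨
    (∃ m, n ≤ m ∧ c = P2ofB i φ (g.1 m, k, (none : Lt))) ∨ c = P2top i φ := by
  rcases h with rfl | h
  · exact Or.inl ⟨n, le_rfl, rfl⟩
  · rcases p2lt_inX_inv h with ⟨m, hm, rfl⟩ | ⟨m, hm, rfl⟩ | rfl
    · exact Or.inl ⟨m, Nat.le_of_lt hm, rfl⟩
    · exact Or.inr (Or.inl ⟨m, hm, rfl⟩)
    · exact Or.inr (Or.inr rfl)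

lemma p2le_fiber {m n : ℕ} {q : Pairt} {x y : Mt} (h : Mle x y) :
    P2le i φ f (P2ofB i φ (m, n, (some (q, x) : Lt))) (P2ofB i φ (m, n, (some (q, y) : Lt))) := by
  by_cases hxy : x = y
  · exact Or.inl (by rw [hxy])
  · exact p2le_ofBsq (bsq_sq1 ⟨h, hxy⟩)

lemma p2le_some_inv {m n : ℕ} {q : Pairt} {x : Mt} {c : P2t i φ}
    (h : P2le i φ f (P2ofB i φ (m, n, (some (q, x) : Lt))) c) :
    (∃ y, c = P2ofB i φ (m, n, (some (q, y) : Lt)) ∧ Mle x y) ∨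
    c = P2ofB i φ (m, n, (none : Lt)) ∨
    (∃ w w', x = Sum.inr w ∧ m = q.1.1 ∧ wordLE w w' ∧
      c = P2ofB i φ (f q w', n+1, (none : Lt))) ∨
    (∃ j K, x = Sum.inl j ∧ m = q.1.2 ∧ j ≤ K ∧
      c = P2ofB i φ (f q (word1 K), n+1, (none : Lt))) ∨
    (∃ j s K, x = Sum.inl j ∧ m = f q s ∧ j ≤ K ∧
      c = P2ofB i φ (f q (wordSnoc s K), n, (none : Lt))) ∨ c = P2top i φ := by
  rcases h with rfl | h
  · exact Or.inl ⟨x, rfl, mle_refl x⟩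
  · rcases p2lt_inB_inv h with ⟨b', rfl, hb⟩ | rfl
    · rcases bsq_some_inv hb with ⟨y, rfl, hxy⟩ | rfl | ⟨w, w', hx, hm, hww, rfl⟩ |
        ⟨j, K, hx, hm, hjK, rfl⟩ | ⟨j, s, K, hx, hm, hjK, rfl⟩
      · exact Or.inl ⟨y, rfl, hxy.1⟩
      · exact Or.inr (Or.inl rfl)
      · exact Or.inr <| Or.inr <| Or.inl ⟨w, w', hx, hm, hww, rfl⟩
      · exact Or.inr <| Or.inr <| Or.inr <| Or.inl ⟨j, K, hx, hm, hjK, rfl⟩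
      · exact Or.inr <| Or.inr <| Or.inr <| Or.inr <| Or.inl ⟨j, s, K, hx, hm, hjK, rfl⟩
    · exact Or.inr <| Or.inr <| Or.inr <| Or.inr <| Or.inr rfl

lemma p2le_some_some_inv {m n m' n' : ℕ} {q q' : Pairt} {x y : Mt}
    (h : P2le i φ f (P2ofB i φ (m, n, (some (q, x) : Lt)))
      (P2ofB i φ (m', n', (some (q', y) : Lt)))) :
    m' = m ∧ n' = n ∧ q' = q ∧ Mle x y := by
  rcases p2le_some_inv h with ⟨y₀, he, hxy⟩ | he | ⟨w, w', hx, hm, hww, he⟩ |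
    ⟨j, K, hx, hm, hjK, he⟩ | ⟨j, s, K, hx, hm, hjK, he⟩ | he
  · have := pB_inj he.symm
    simp only [Prod.mk.injEq, Option.some.injEq] at this
    obtain ⟨rfl, rfl, rfl, rfl⟩ := this
    exact ⟨rfl, rfl, rfl, hxy⟩
  all_goals first
    | (exact absurd (pB_inj he) (by simp))
    | (simp [P2top, P2ofB] at he)

end ShapeLemmas

/-- A subset of `ℕ` is unbounded. -/
def Unbdd (S : Set ℕ) : Prop := ∀ L, ∃ j ∈ S, L ≤ j

lemma nat_max_of_not_unbdd {S : Set ℕ} (hne : S.Nonempty) (h : ¬ Unbdd S) :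
    ∃ N ∈ S, ∀ j ∈ S, j ≤ N := by
  simp only [Unbdd, not_forall, not_exists, not_and, not_le] at h
  obtain ⟨L, hL⟩ := h
  have hbdd : BddAbove S := ⟨L, fun j hj => le_of_lt (hL j hj)⟩
  exact ⟨sSup S, Nat.sSup_mem hne hbdd, fun j hj => le_csSup hbdd hj⟩

lemma wordlt_length {w w' : NWord} (h : wordLE w w') (hne : w ≠ w') :
    w.1.length + 1 ≤ w'.1.length := by
  have h1 := wordLE_length h
  rcases eq_or_lt_of_le h1 with he | hlt
  · exact absurd (Subtype.ext (h.eq_of_length he)) hne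
  · omega

lemma word_chain_unbdd {S : Set NWord} (hsucc : ∀ w ∈ S, ∃ w' ∈ S, wordLE w w' ∧ w ≠ w')
    {w₀ : NWord} (hw₀ : w₀ ∈ S) : ∀ L, ∃ w ∈ S, L ≤ w.1.length := by
  intro L
  induction L with
  | zero => exact ⟨w₀, hw₀, Nat.zero_le _⟩
  | succ L ih =>
    obtain ⟨w, hw, hl⟩ := ih
    obtain ⟨w', hw', hle, hne⟩ := hsucc w hw
    exact ⟨w', hw', le_trans (by omega) (wordlt_length hle hne)⟩

section UbLemmas

variable {i : Pairt → Set ℕ} {φ : ℕ → Pairt} {f : Pairt → NWord → ℕ}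

lemma top_of_inr_inr {u : Unit} : (Sum.inr (Sum.inr u) : P2t i φ) = P2top i φ := by
  cases u; rfl

lemma ub_col_top (hif : IFData i f) (hφ : Function.Bijective φ) {g : Xt i φ} {k : ℕ}
    {S : Set ℕ} (hS : Unbdd S) {v : P2t i φ}
    (hv : ∀ n ∈ S, P2le i φ f (Sum.inl (g, n, k)) v) : v = P2top i φ := by
  rcases v with ⟨g', n', k'⟩ | b | u
  · obtain ⟨j, hj, hjge⟩ := hS (n' + 1)
    rcases p2le_inX_inv (hv j hj) with ⟨m, hm, he⟩ | ⟨m, hm, he⟩ | he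
    · simp only [Sum.inl.injEq, Prod.mk.injEq] at he
      omega
    · simp [P2ofB] at he
    · simp [P2top] at he
  · obtain ⟨j₀, hj₀, -⟩ := hS 0
    obtain ⟨m₀, hm₀, he₀⟩ : ∃ m₀, j₀ ≤ m₀ ∧ (Sum.inr (Sum.inl b) : P2t i φ) =
        P2ofB i φ (g.1 m₀, k, (none : Lt)) := by
      rcases p2le_inX_inv (hv j₀ hj₀) with ⟨m, hm, he⟩ | ⟨m, hm, he⟩ | he
      · simp at he
      · exact ⟨m, hm, he⟩
      · simp [P2top] at he
    obtain ⟨j, hj, hjge⟩ := hS (m₀ + 1)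
    obtain ⟨m₁, hm₁, he₁⟩ : ∃ m₁, j ≤ m₁ ∧ (Sum.inr (Sum.inl b) : P2t i φ) =
        P2ofB i φ (g.1 m₁, k, (none : Lt)) := by
      rcases p2le_inX_inv (hv j hj) with ⟨m, hm, he⟩ | ⟨m, hm, he⟩ | he
      · simp at he
      · exact ⟨m, hm, he⟩
      · simp [P2top] at he
    have hb : (g.1 m₀, k, (none : Lt)) = (g.1 m₁, k, (none : Lt)) := pB_inj (he₀.symm.trans he₁)
    have : m₀ = m₁ := Xt.inj hif hφ g (by simpa using hb)
    omega
  · exact top_of_inr_inr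

lemma ub_fibI (hif : IFData i f) {m n : ℕ} {q : Pairt} {S : Set ℕ} (hS : Unbdd S)
    {v : P2t i φ}
    (hv : ∀ j ∈ S, P2le i φ f (P2ofB i φ (m, n, (some (q, Sum.inl j) : Lt))) v) :
    v = P2ofB i φ (m, n, (none : Lt)) ∨ v = P2top i φ := by
  rcases v with ⟨g', n', k'⟩ | b | u
  · obtain ⟨j₀, hj₀, -⟩ := hS 0
    exact absurd (hv j₀ hj₀) p2le_pB_inX
  · obtain ⟨m', n', ℓ⟩ := b
    cases ℓ with
    | some pz =>
      obtain ⟨q', y⟩ := pz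
      obtain ⟨j₀, hj₀, -⟩ := hS 0
      obtain ⟨rfl, rfl, rfl, hy⟩ := p2le_some_some_inv (hv j₀ hj₀)
      rcases y with J | w
      · obtain ⟨j, hj, hjge⟩ := hS (J + 1)
        have : (j : ℕ) ≤ J := by
          simpa [Mle] using (p2le_some_some_inv (hv j hj)).2.2.2
        omega
      · exact absurd hy mle_inl_inr
    | none =>
      have key : ∀ j ∈ S, (m' = m ∧ n' = n) ∨
          (∃ K, j ≤ K ∧ m = q.1.2 ∧ m' = f q (word1 K) ∧ n' = n + 1) ∨
          (∃ s K, j ≤ K ∧ m = f q s ∧ m' = f q (wordSnoc s K) ∧ n' = n) := by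
        intro j hj
        rcases p2le_some_inv (hv j hj) with ⟨y, he, -⟩ | he | ⟨w, w', hx, -, -, -⟩ |
          ⟨j', K, hx, hmb, hjK, he⟩ | ⟨j', s, K, hx, hms, hjK, he⟩ | he
        · exact absurd (pB_inj he) (by simp)
        · have := pB_inj he
          simp only [Prod.mk.injEq] at this
          exact Or.inl ⟨this.1, this.2.1⟩
        · simp at hx
        · obtain rfl : j' = j := by simpa using hx.symm
          have := pB_inj he
          simp only [Prod.mk.injEq] at this
          exact Or.inr (Or.inl ⟨K, hjK, hmb, this.1, this.2.1⟩)
        · obtain rfl : j' = j := by simpa using hx.symm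
          have := pB_inj he
          simp only [Prod.mk.injEq] at this
          exact Or.inr (Or.inr ⟨s, K, hjK, hms, this.1, this.2.1⟩)
        · simp [P2top, P2ofB] at he
      obtain ⟨j₁, hj₁, -⟩ := hS 0
      rcases key j₁ hj₁ with ⟨rfl, rfl⟩ | ⟨K₁, hle₁, hmb, hm', hn'⟩ |
        ⟨s₁, K₁, hle₁, hms, hm', hn'⟩
      · exact Or.inl rfl
      · obtain ⟨j₂, hj₂, hj₂K⟩ := hS (K₁ + 1)
        rcases key j₂ hj₂ with ⟨rfl, rfl⟩ | ⟨K₂, hle₂, -, hm'₂, -⟩ |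
          ⟨s₂, K₂, hle₂, -, -, hn'₂⟩
        · exact Or.inl rfl
        · have : word1 K₂ = word1 K₁ := (hif.f_inj2 (hm'₂.symm.trans hm')).2
          have := word1_inj this
          omega
        · omega
      · obtain ⟨j₂, hj₂, hj₂K⟩ := hS (K₁ + 1)
        rcases key j₂ hj₂ with ⟨rfl, rfl⟩ | ⟨K₂, hle₂, -, hm'₂, hn'₂⟩ |
          ⟨s₂, K₂, hle₂, hms₂, hm'₂, -⟩
        · exact Or.inl rfl
        · omega
        · have hss : s₂ = s₁ := (hif.f_inj2 (hms₂.symm.trans hms)).2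
          subst hss
          have : wordSnoc s₂ K₂ = wordSnoc s₂ K₁ := (hif.f_inj2 (hm'₂.symm.trans hm')).2
          have := wordSnoc_inj_right this
          omega
  · exact Or.inr top_of_inr_inr

lemma ub_fibW (hif : IFData i f) {m n : ℕ} {q : Pairt} {S : Set NWord}
    (hlen : ∀ L, ∃ w ∈ S, L ≤ w.1.length) {v : P2t i φ}
    (hv : ∀ w ∈ S, P2le i φ f (P2ofB i φ (m, n, (some (q, Sum.inr w) : Lt))) v) :
    v = P2ofB i φ (m, n, (none : Lt)) ∨ v = P2top i φ := by
  rcases v with ⟨g', n', k'⟩ | b | u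
  · obtain ⟨w₀, hw₀, -⟩ := hlen 0
    exact absurd (hv w₀ hw₀) p2le_pB_inX
  · obtain ⟨m', n', ℓ⟩ := b
    cases ℓ with
    | some pz =>
      obtain ⟨q', y⟩ := pz
      obtain ⟨w₀, hw₀, -⟩ := hlen 0
      obtain ⟨rfl, rfl, rfl, hy⟩ := p2le_some_some_inv (hv w₀ hw₀)
      rcases y with J | W
      · exact absurd hy mle_inr_inl
      · obtain ⟨w, hw, hwge⟩ := hlen (W.1.length + 1)
        have : wordLE w W := by
          simpa [Mle] using (p2le_some_some_inv (hv w hw)).2.2.2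
        have := wordLE_length this
        omega
    | none =>
      have key : ∀ w ∈ S, (m' = m ∧ n' = n) ∨
          (∃ w'', wordLE w w'' ∧ m = q.1.1 ∧ m' = f q w'' ∧ n' = n + 1) := by
        intro w hw
        rcases p2le_some_inv (hv w hw) with ⟨y, he, -⟩ | he | ⟨w₁, w'', hx, hma, hww, he⟩ |
          ⟨j', K, hx, -, -, -⟩ | ⟨j', s, K, hx, -, -, -⟩ | he
        · exact absurd (pB_inj he) (by simp)
        · have := pB_inj he
          simp only [Prod.mk.injEq] at this
          exact Or.inl ⟨this.1, this.2.1⟩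
        · obtain rfl : w₁ = w := by simpa using hx.symm
          have := pB_inj he
          simp only [Prod.mk.injEq] at this
          exact Or.inr ⟨w'', hww, hma, this.1, this.2.1⟩
        · simp at hx
        · simp at hx
        · simp [P2top, P2ofB] at he
      obtain ⟨w₁, hw₁, -⟩ := hlen 0
      rcases key w₁ hw₁ with ⟨rfl, rfl⟩ | ⟨w₁', hle₁, hma, hm', hn'⟩
      · exact Or.inl rfl
      · obtain ⟨w₂, hw₂, hw₂len⟩ := hlen (w₁'.1.length + 1)
        rcases key w₂ hw₂ with ⟨rfl, rfl⟩ | ⟨w₂', hle₂, -, hm'₂, -⟩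
        · exact Or.inl rfl
        · have : w₂' = w₁' := (hif.f_inj2 (hm'₂.symm.trans hm')).2
          subst this
          have := wordLE_length hle₂
          omega
  · exact Or.inr top_of_inr_inr

end UbLemmas

section LubClassify

variable {i : Pairt → Set ℕ} {φ : ℕ → Pairt} {f : Pairt → NWord → ℕ}

lemma lub_classify (hif : IFData i f) (hφ : Function.Bijective φ)
    {D : Set (P2t i φ)} {u : P2t i φ}
    (hD : DirectedOn' (P2le i φ f) D) (hu : IsLub' (P2le i φ f) D u) (hnotin : u ∉ D) :
    (∃ g k, (∀ x ∈ D, ∃ n, x = Sum.inl (g, n, k)) ∧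
        Unbdd {n | Sum.inl (g, n, k) ∈ D} ∧ u = P2top i φ) ∨
    (∃ m n q, (∀ x ∈ D, ∃ j, x = P2ofB i φ (m, n, (some (q, Sum.inl j) : Lt))) ∧
        Unbdd {j | P2ofB i φ (m, n, (some (q, Sum.inl j) : Lt)) ∈ D} ∧
        u = P2ofB i φ (m, n, (none : Lt))) ∨
    (∃ m n q, (∀ x ∈ D, ∃ w, x = P2ofB i φ (m, n, (some (q, Sum.inr w) : Lt))) ∧
        (∀ v ∈ {w | P2ofB i φ (m, n, (some (q, Sum.inr w) : Lt)) ∈ D},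
          ∀ w ∈ {w | P2ofB i φ (m, n, (some (q, Sum.inr w) : Lt)) ∈ D},
            wordLE v w ∨ wordLE w v) ∧
        (∀ L, ∃ w ∈ {w | P2ofB i φ (m, n, (some (q, Sum.inr w) : Lt)) ∈ D},
          L ≤ w.1.length) ∧
        u = P2ofB i φ (m, n, (none : Lt))) := by
  have hntop : ∀ t ∈ D, ¬ (∀ e ∈ D, P2le i φ f e t) := by
    intro t ht h
    exact hnotin (p2le_antisymm (hu.2 t h) (hu.1 t ht) ▸ ht)
  have htopD : P2top i φ ∉ D := fun h => hntop _ h (fun e _ => p2le_top e)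
  have hnoneD : ∀ m n, P2ofB i φ (m, n, (none : Lt)) ∉ D := by
    intro m n hmem
    refine hntop _ hmem (fun e he => ?_)
    obtain ⟨z, hz, hdz, hez⟩ := hD.2 _ hmem _ he
    rcases p2le_noneB_inv hdz with rfl | rfl
    · exact hez
    · exact absurd hz htopD
  obtain ⟨d₀, hd₀⟩ := hD.1
  rcases d₀ with ⟨g, n₀, k⟩ | ⟨m, n, ℓ⟩ | u'
  · -- X column case
    have hcol : ∀ x ∈ D, ∃ n, x = Sum.inl (g, n, k) := by
      intro e he
      obtain ⟨z, hz, hdz, hez⟩ := hD.2 _ hd₀ _ he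
      obtain ⟨mz, -, rfl⟩ : ∃ mz, n₀ ≤ mz ∧ z = Sum.inl (g, mz, k) := by
        rcases p2le_inX_inv hdz with ⟨mz, hm, rfl⟩ | ⟨mz, -, rfl⟩ | rfl
        · exact ⟨mz, hm, rfl⟩
        · exact absurd hz (hnoneD _ _)
        · exact absurd hz htopD
      rcases e with ⟨g', n', k'⟩ | b | u'
      · rcases p2le_inX_inv hez with ⟨m', -, he'⟩ | ⟨m', -, he'⟩ | he'
        · simp only [Sum.inl.injEq, Prod.mk.injEq] at he'
          exact ⟨n', by rw [he'.1, he'.2.2]⟩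
        · simp [P2ofB] at he'
        · simp [P2top] at he'
      · exact absurd hez p2le_pB_inX
      · exact absurd (top_of_inr_inr ▸ he) htopD
    have hSun : Unbdd {n | Sum.inl (g, n, k) ∈ D} := by
      by_contra hnu
      obtain ⟨N, hN, hNmax⟩ := nat_max_of_not_unbdd ⟨n₀, hd₀⟩ hnu
      refine hntop _ hN (fun e he => ?_)
      obtain ⟨n, rfl⟩ := hcol e he
      exact p2le_X_mono (hNmax n he)
    exact Or.inl ⟨g, k, hcol, hSun, ub_col_top hif hφ hSun (fun n hn => hu.1 _ hn)⟩
  · cases ℓ with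
    | none => exact absurd hd₀ (hnoneD _ _)
    | some pz =>
      obtain ⟨q, x⟩ := pz
      have hfib : ∀ e ∈ D, ∃ y, e = P2ofB i φ (m, n, (some (q, y) : Lt)) := by
        intro e he
        obtain ⟨z, hz, hdz, hez⟩ := hD.2 _ hd₀ _ he
        obtain ⟨yz, rfl⟩ : ∃ yz, z = P2ofB i φ (m, n, (some (q, yz) : Lt)) := by
          rcases p2le_some_inv hdz with ⟨y, rfl, -⟩ | rfl | ⟨w, w', -, -, -, rfl⟩ |
            ⟨j, K, -, -, -, rfl⟩ | ⟨j, s, K, -, -, -, rfl⟩ | rfl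
          · exact ⟨y, rfl⟩
          all_goals first
            | exact absurd hz (hnoneD _ _)
            | exact absurd hz htopD
        rcases e with ⟨g', n', k'⟩ | ⟨me, ne, ℓe⟩ | u'
        · rcases p2le_inX_inv hez with ⟨m', -, he'⟩ | ⟨m', -, he'⟩ | he'
          · simp [P2ofB] at he'
          · exact absurd (pB_inj he') (by simp)
          · simp [P2top, P2ofB] at he'
        · cases ℓe with
          | none => exact absurd he (hnoneD _ _)
          | some pe =>
            obtain ⟨qe, xe⟩ := pe
            obtain ⟨rfl, rfl, rfl, -⟩ := p2le_some_some_inv hez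
            exact ⟨xe, rfl⟩
        · exact absurd (top_of_inr_inr ▸ he) htopD
      rcases x with j₀ | w₀
      · -- inl fiber chain
        have hall : ∀ e ∈ D, ∃ j, e = P2ofB i φ (m, n, (some (q, Sum.inl j) : Lt)) := by
          intro e he
          obtain ⟨y, rfl⟩ := hfib e he
          rcases y with j | w
          · exact ⟨j, rfl⟩
          · obtain ⟨z, hz, hdz, hez⟩ := hD.2 _ hd₀ _ he
            obtain ⟨yz, rfl⟩ := hfib z hz
            have h1 := (p2le_some_some_inv hdz).2.2.2
            have h2 := (p2le_some_some_inv hez).2.2.2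
            rcases yz with jz | wz
            · exact absurd h2 mle_inr_inl
            · exact absurd h1 mle_inl_inr
        have hSun : Unbdd {j | P2ofB i φ (m, n, (some (q, Sum.inl j) : Lt)) ∈ D} := by
          by_contra hnu
          obtain ⟨N, hN, hNmax⟩ := nat_max_of_not_unbdd ⟨j₀, hd₀⟩ hnu
          refine hntop _ hN (fun e he => ?_)
          obtain ⟨j, rfl⟩ := hall e he
          exact p2le_fiber (by simpa [Mle] using hNmax j he)
        have hub := ub_fibI (φ := φ) hif hSun (fun j hj => hu.1 _ hj)
        rcases hub with rfl | rfl
        · exact Or.inr (Or.inl ⟨m, n, q, hall, hSun, rfl⟩)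
        · exfalso
          have hvub : ∀ e ∈ D, P2le i φ f e (P2ofB i φ (m, n, (none : Lt))) := by
            intro e he
            obtain ⟨j, rfl⟩ := hall e he
            exact p2le_ofBsq bsq_tonone
          have := p2le_top_inv (hu.2 _ hvub)
          simp [P2top, P2ofB] at this
      · -- inr fiber chain
        have hall : ∀ e ∈ D, ∃ w, e = P2ofB i φ (m, n, (some (q, Sum.inr w) : Lt)) := by
          intro e he
          obtain ⟨y, rfl⟩ := hfib e he
          rcases y with j | w
          · obtain ⟨z, hz, hdz, hez⟩ := hD.2 _ hd₀ _ he
            obtain ⟨yz, rfl⟩ := hfib z hz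
            have h1 := (p2le_some_some_inv hdz).2.2.2
            have h2 := (p2le_some_some_inv hez).2.2.2
            rcases yz with jz | wz
            · exact absurd h1 mle_inr_inl
            · exact absurd h2 mle_inl_inr
          · exact ⟨w, rfl⟩
        have hcomp : ∀ v ∈ {w | P2ofB i φ (m, n, (some (q, Sum.inr w) : Lt)) ∈ D},
            ∀ w ∈ {w | P2ofB i φ (m, n, (some (q, Sum.inr w) : Lt)) ∈ D},
              wordLE v w ∨ wordLE w v := by
          intro v hv w hw
          obtain ⟨z, hz, hvz, hwz⟩ := hD.2 _ hv _ hw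
          obtain ⟨yz, rfl⟩ := hfib z hz
          have h1 := (p2le_some_some_inv hvz).2.2.2
          have h2 := (p2le_some_some_inv hwz).2.2.2
          rcases yz with jz | wz
          · exact absurd h1 mle_inr_inl
          · exact wordLE_comparable (by simpa [Mle] using h1) (by simpa [Mle] using h2)
        have hsucc : ∀ w ∈ {w | P2ofB i φ (m, n, (some (q, Sum.inr w) : Lt)) ∈ D},
            ∃ w' ∈ {w | P2ofB i φ (m, n, (some (q, Sum.inr w) : Lt)) ∈ D},
              wordLE w w' ∧ w ≠ w' := by
          intro w hw
          have := hntop _ hw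
          push_neg at this
          obtain ⟨e, he, hne⟩ := this
          obtain ⟨z, hz, hez, hwz⟩ := hD.2 _ he _ hw
          obtain ⟨yz, rfl⟩ := hfib z hz
          have h2 := (p2le_some_some_inv hwz).2.2.2
          obtain ⟨wz, rfl⟩ : ∃ wz, yz = Sum.inr wz := by
            rcases yz with jz | wz
            · exact absurd h2 mle_inr_inl
            · exact ⟨wz, rfl⟩
          refine ⟨wz, hz, by simpa [Mle] using h2, ?_⟩
          rintro rfl
          exact hne hez
        have hlen := word_chain_unbdd hsucc hd₀
        have hub := ub_fibW (φ := φ) hif hlen (fun w hw => hu.1 _ hw)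
        rcases hub with rfl | rfl
        · exact Or.inr (Or.inr ⟨m, n, q, hall, hcomp, hlen, rfl⟩)
        · exfalso
          have hvub : ∀ e ∈ D, P2le i φ f e (P2ofB i φ (m, n, (none : Lt))) := by
            intro e he
            obtain ⟨w, rfl⟩ := hall e he
            exact p2le_ofBsq bsq_tonone
          have := p2le_top_inv (hu.2 _ hvub)
          simp [P2top, P2ofB] at this
  · exact absurd (top_of_inr_inr ▸ hd₀) htopD

end LubClassify

section CondMachinery

variable {i : Pairt → Set ℕ} {φ : ℕ → Pairt} {f : Pairt → NWord → ℕ}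

/-- The down-closure of a set of generators. -/
def dSet (i : Pairt → Set ℕ) (φ : ℕ → Pairt) (f : Pairt → NWord → ℕ)
    (G : Set (P2t i φ)) : Set (P2t i φ) :=
  {z | ∃ c ∈ G, P2le i φ f z c}

lemma mem_dSet_self {G : Set (P2t i φ)} {c : P2t i φ} (h : c ∈ G) : c ∈ dSet i φ f G :=
  ⟨c, h, p2le_refl c⟩

lemma dSet_lower {G : Set (P2t i φ)} {x y : P2t i φ} (h : P2le i φ f x y)
    (hy : y ∈ dSet i φ f G) : x ∈ dSet i φ f G := by
  obtain ⟨c, hc, hyc⟩ := hy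
  exact ⟨c, hc, p2le_trans h hyc⟩

lemma dSet_subset {G : Set (P2t i φ)} {C : Set (P2t i φ)}
    (hlow : ∀ x y, P2le i φ f x y → y ∈ C → x ∈ C) (hG : G ⊆ C) :
    dSet i φ f G ⊆ C := by
  rintro z ⟨c, hc, hzc⟩
  exact hlow _ _ hzc (hG hc)

/-- The three Scott-closure conditions. -/
def CondC (i : Pairt → Set ℕ) (φ : ℕ → Pairt) (f : Pairt → NWord → ℕ)
    (A : Set (P2t i φ)) : Prop :=
  (∀ g k, Unbdd {n | Sum.inl (g, n, k) ∈ A} → P2top i φ ∈ A) ∧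
  (∀ m n q, Unbdd {j | P2ofB i φ (m, n, (some (q, Sum.inl j) : Lt)) ∈ A} →
    P2ofB i φ (m, n, (none : Lt)) ∈ A) ∧
  (∀ m n q (S : Set NWord),
    (∀ w ∈ S, P2ofB i φ (m, n, (some (q, Sum.inr w) : Lt)) ∈ A) →
    (∀ v ∈ S, ∀ w ∈ S, wordLE v w ∨ wordLE w v) →
    (∀ L, ∃ w ∈ S, L ≤ w.1.length) →
    P2ofB i φ (m, n, (none : Lt)) ∈ A)

lemma closed_of_cond (hif : IFData i f) (hφ : Function.Bijective φ) {A : Set (P2t i φ)}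
    (hlow : ∀ x y, P2le i φ f x y → y ∈ A → x ∈ A) (hc : CondC i φ f A) :
    ScottClosed' (P2le i φ f) A := by
  refine ⟨hlow, fun D u hsub hD hu => ?_⟩
  by_cases hin : u ∈ D
  · exact hsub hin
  · rcases lub_classify hif hφ hD hu hin with ⟨g, k, -, hS, rfl⟩ |
      ⟨m, n, q, -, hS, rfl⟩ | ⟨m, n, q, -, hcomp, hlen, rfl⟩
    · refine hc.1 g k (fun L => ?_)
      obtain ⟨j, hj, hjL⟩ := hS L
      exact ⟨j, hsub hj, hjL⟩
    · refine hc.2.1 m n q (fun L => ?_)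
      obtain ⟨j, hj, hjL⟩ := hS L
      exact ⟨j, hsub hj, hjL⟩
    · exact hc.2.2 m n q _ (fun w hw => hsub hw) hcomp hlen

lemma cond_of_closed (hif : IFData i f) (hφ : Function.Bijective φ) {A : Set (P2t i φ)}
    (hcl : ScottClosed' (P2le i φ f) A) : CondC i φ f A := by
  refine ⟨?_, ?_, ?_⟩
  · intro g k hS
    set D : Set (P2t i φ) := {x | ∃ n, Sum.inl (g, n, k) ∈ A ∧ x = Sum.inl (g, n, k)} with hDdef
    have hsub : D ⊆ A := by rintro x ⟨n, hn, rfl⟩; exact hn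
    have hdir : DirectedOn' (P2le i φ f) D := by
      constructor
      · obtain ⟨j, hj, -⟩ := hS 0
        exact ⟨_, j, hj, rfl⟩
      · rintro x ⟨n₁, h₁, rfl⟩ y ⟨n₂, h₂, rfl⟩
        obtain ⟨j, hj, hjL⟩ := hS (max n₁ n₂)
        exact ⟨_, ⟨j, hj, rfl⟩, p2le_X_mono (le_trans (le_max_left _ _) hjL),
          p2le_X_mono (le_trans (le_max_right _ _) hjL)⟩
    have hlub : IsLub' (P2le i φ f) D (P2top i φ) := by
      constructor
      · intro x _; exact p2le_top x
      · intro v hv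
        have : v = P2top i φ :=
          ub_col_top hif hφ hS (fun n hn => hv _ ⟨n, hn, rfl⟩)
        rw [this]
        exact p2le_refl _
    exact hcl.2 D _ hsub hdir hlub
  · intro m n q hS
    set D : Set (P2t i φ) := {x | ∃ j, P2ofB i φ (m, n, (some (q, Sum.inl j) : Lt)) ∈ A ∧
      x = P2ofB i φ (m, n, (some (q, Sum.inl j) : Lt))} with hDdef
    have hsub : D ⊆ A := by rintro x ⟨j, hj, rfl⟩; exact hj
    have hdir : DirectedOn' (P2le i φ f) D := by
      constructor
      · obtain ⟨j, hj, -⟩ := hS 0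
        exact ⟨_, j, hj, rfl⟩
      · rintro x ⟨n₁, h₁, rfl⟩ y ⟨n₂, h₂, rfl⟩
        obtain ⟨j, hj, hjL⟩ := hS (max n₁ n₂)
        exact ⟨_, ⟨j, hj, rfl⟩,
          p2le_fiber (by simp [Mle]; omega),
          p2le_fiber (by simp [Mle]; omega)⟩
    have hlub : IsLub' (P2le i φ f) D (P2ofB i φ (m, n, (none : Lt))) := by
      constructor
      · rintro x ⟨j, hj, rfl⟩
        exact p2le_ofBsq bsq_tonone
      · intro v hv
        rcases ub_fibI (φ := φ) hif hS (fun j hj => hv _ ⟨j, hj, rfl⟩) with rfl | rfl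
        · exact p2le_refl _
        · exact p2le_top _
    exact hcl.2 D _ hsub hdir hlub
  · intro m n q S hSA hcomp hlen
    set D : Set (P2t i φ) := {x | ∃ w ∈ S, x = P2ofB i φ (m, n, (some (q, Sum.inr w) : Lt))}
      with hDdef
    have hsub : D ⊆ A := by rintro x ⟨w, hw, rfl⟩; exact hSA w hw
    have hdir : DirectedOn' (P2le i φ f) D := by
      constructor
      · obtain ⟨w, hw, -⟩ := hlen 0
        exact ⟨_, w, hw, rfl⟩
      · rintro x ⟨w₁, h₁, rfl⟩ y ⟨w₂, h₂, rfl⟩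
        rcases hcomp w₁ h₁ w₂ h₂ with h | h
        · exact ⟨_, ⟨w₂, h₂, rfl⟩, p2le_fiber (by simpa [Mle] using h),
            p2le_refl _⟩
        · exact ⟨_, ⟨w₁, h₁, rfl⟩, p2le_refl _,
            p2le_fiber (by simpa [Mle] using h)⟩
    have hlub : IsLub' (P2le i φ f) D (P2ofB i φ (m, n, (none : Lt))) := by
      constructor
      · rintro x ⟨w, hw, rfl⟩
        exact p2le_ofBsq bsq_tonone
      · intro v hv
        have hS' : ∀ L, ∃ w ∈ S, L ≤ w.1.length := hlen
        rcases ub_fibW (φ := φ) hif hS' (fun w hw => hv _ ⟨w, hw, rfl⟩) with rfl | rfl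
        · exact p2le_refl _
        · exact p2le_top _
    exact hcl.2 D _ hsub hdir hlub

end CondMachinery

section Structure

variable {i : Pairt → Set ℕ} {φ : ℕ → Pairt} {f : Pairt → NWord → ℕ}

/-- The set of (coordinates of) `none`-elements of `C`. -/
def NSet (i : Pairt → Set ℕ) (φ : ℕ → Pairt) (C : Set (P2t i φ)) : Set (ℕ × ℕ) :=
  {t | P2ofB i φ (t.1, t.2, (none : Lt)) ∈ C}

/-- The set of maximal non-`none` non-top elements of `C`. -/
def MxSet (i : Pairt → Set ℕ) (φ : ℕ → Pairt) (f : Pairt → NWord → ℕ)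
    (C : Set (P2t i φ)) : Set (P2t i φ) :=
  {x | x ∈ C ∧ (∀ y ∈ C, P2le i φ f x y → y = x) ∧
    (∀ m n, x ≠ P2ofB i φ (m, n, (none : Lt))) ∧ x ≠ P2top i φ}

lemma exists_word_chain {W : Set NWord} {w : NWord} (hw : w ∈ W)
    (hsucc : ∀ v ∈ W, ∃ v' ∈ W, wordLE v v' ∧ v ≠ v') :
    ∃ S : Set NWord, S ⊆ W ∧ (∀ a ∈ S, ∀ b ∈ S, wordLE a b ∨ wordLE b a) ∧
      ∀ L, ∃ v ∈ S, L ≤ v.1.length := by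
  classical
  have hstep : ∀ p : {v : NWord // v ∈ W}, ∃ p' : {v : NWord // v ∈ W},
      wordLE p.1 p'.1 ∧ p.1 ≠ p'.1 := by
    rintro ⟨v, hv⟩
    obtain ⟨v', hv', hle, hne⟩ := hsucc v hv
    exact ⟨⟨v', hv'⟩, hle, hne⟩
  choose F hF1 hF2 using hstep
  let seq : ℕ → {v : NWord // v ∈ W} := fun L => Nat.rec ⟨w, hw⟩ (fun _ p => F p) L
  have hseq_succ : ∀ L, wordLE (seq L).1 (seq (L + 1)).1 ∧ (seq L).1 ≠ (seq (L + 1)).1 :=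
    fun L => ⟨hF1 _, hF2 _⟩
  have hmono : ∀ a b, a ≤ b → wordLE (seq a).1 (seq b).1 := by
    intro a b hab
    induction b with
    | zero => obtain rfl : a = 0 := Nat.le_zero.1 hab; exact wordLE_refl _
    | succ b ih =>
      rcases Nat.le_succ_iff_eq_or_le.mp hab with rfl | h
      · exact wordLE_refl _
      · rcases Nat.lt_or_ge a (b + 1) with h' | h'
        · exact wordLE_trans (ih (Nat.lt_succ_iff.1 h')) (hseq_succ b).1
        · obtain rfl : a = b + 1 := le_antisymm hab h'
          exact wordLE_refl _
  have hlen : ∀ L, L ≤ (seq L).1.1.length := by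
    intro L
    induction L with
    | zero => exact Nat.zero_le _
    | succ L ih =>
      have := wordlt_length (hseq_succ L).1 (hseq_succ L).2
      omega
  refine ⟨{v | ∃ L, v = (seq L).1}, ?_, ?_, ?_⟩
  · rintro v ⟨L, rfl⟩; exact (seq L).2
  · rintro a ⟨La, rfl⟩ b ⟨Lb, rfl⟩
    rcases Nat.le_total La Lb with h | h
    · exact Or.inl (hmono _ _ h)
    · exact Or.inr (hmono _ _ h)
  · intro L
    exact ⟨(seq L).1, ⟨L, rfl⟩, hlen L⟩

lemma struct_decomp (hif : IFData i f) (hφ : Function.Bijective φ) {C : Set (P2t i φ)}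
    (hcl : ScottClosed' (P2le i φ f) C) (htop : P2top i φ ∉ C) {z : P2t i φ} (hz : z ∈ C) :
    ∃ c ∈ C, P2le i φ f z c ∧
      ((∃ m n, c = P2ofB i φ (m, n, (none : Lt))) ∨ c ∈ MxSet i φ f C) := by
  have hcond := cond_of_closed hif hφ hcl
  rcases z with ⟨g, j, k⟩ | ⟨m, n, ℓ⟩ | u
  · -- X part
    have hbd : ¬ Unbdd {n | Sum.inl (g, n, k) ∈ C} := fun h => htop (hcond.1 g k h)
    obtain ⟨N', hN', hNmax⟩ := nat_max_of_not_unbdd ⟨j, hz⟩ hbd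
    by_cases hup : ∃ m' n', P2ofB i φ (m', n', (none : Lt)) ∈ C ∧
        P2le i φ f (Sum.inl (g, N', k)) (P2ofB i φ (m', n', (none : Lt)))
    · obtain ⟨m', n', hmem, hle⟩ := hup
      exact ⟨_, hmem, p2le_trans (p2le_X_mono (hNmax j hz)) hle, Or.inl ⟨m', n', rfl⟩⟩
    · refine ⟨Sum.inl (g, N', k), hN', p2le_X_mono (hNmax j hz), Or.inr ⟨hN', ?_, ?_, ?_⟩⟩
      · intro y hy hley
        rcases p2le_inX_inv hley with ⟨m', hm', rfl⟩ | ⟨m', hm', rfl⟩ | rfl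
        · have := hNmax m' hy
          have : m' = N' := le_antisymm this hm'
          rw [this]
        · exact absurd ⟨_, _, hy, p2le_X_none hm'⟩ hup
        · exact absurd hy htop
      · intro m' n'; simp [P2ofB]
      · simp [P2top]
  · cases ℓ with
    | none => exact ⟨_, hz, p2le_refl _, Or.inl ⟨m, n, rfl⟩⟩
    | some pz =>
      obtain ⟨q, x⟩ := pz
      by_cases hup : ∃ m' n', P2ofB i φ (m', n', (none : Lt)) ∈ C ∧
          P2le i φ f (P2ofB i φ (m, n, (some (q, x) : Lt))) (P2ofB i φ (m', n', (none : Lt)))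
      · obtain ⟨m', n', hmem, hle⟩ := hup
        exact ⟨_, hmem, hle, Or.inl ⟨m', n', rfl⟩⟩
      · rcases x with j | w
        · -- inl case
          have hbd : ¬ Unbdd {j' | P2ofB i φ (m, n, (some (q, Sum.inl j') : Lt)) ∈ C} := by
            intro h
            exact hup ⟨m, n, hcond.2.1 m n q h, p2le_ofBsq bsq_tonone⟩
          obtain ⟨J, hJ, hJmax⟩ := nat_max_of_not_unbdd ⟨j, hz⟩ hbd
          have hzJ : P2le i φ f (P2ofB i φ (m, n, (some (q, Sum.inl j) : Lt)))
              (P2ofB i φ (m, n, (some (q, Sum.inl J) : Lt))) :=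
            p2le_fiber (by simpa [Mle] using hJmax j hz)
          refine ⟨_, hJ, hzJ, Or.inr ⟨hJ, ?_, ?_, ?_⟩⟩
          · intro y hy hley
            rcases p2le_some_inv hley with ⟨y', rfl, hmy⟩ | rfl | ⟨w', w'', hx, -, -, rfl⟩ |
              ⟨j', K, hx, -, -, rfl⟩ | ⟨j', s, K, hx, -, -, rfl⟩ | rfl
            · obtain ⟨j'', rfl⟩ : ∃ j'', y' = Sum.inl j'' := by
                rcases y' with j'' | w'
                · exact ⟨j'', rfl⟩
                · exact absurd hmy mle_inl_inr
              have h1 : j'' ≤ J := hJmax j'' hy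
              have h2 : J ≤ j'' := by simpa [Mle] using hmy
              rw [le_antisymm h1 h2]
            · exact absurd ⟨m, n, hy, p2le_trans hzJ hley⟩ hup
            · simp at hx
            · exact absurd ⟨_, _, hy, p2le_trans hzJ hley⟩ hup
            · exact absurd ⟨_, _, hy, p2le_trans hzJ hley⟩ hup
            · exact absurd hy htop
          · intro m' n'; simp [P2ofB]
          · simp [P2top, P2ofB]
        · -- inr case
          set W : Set NWord :=
            {w' | P2ofB i φ (m, n, (some (q, Sum.inr w') : Lt)) ∈ C ∧ wordLE w w'} with hW
          have hwW : w ∈ W := ⟨hz, wordLE_refl w⟩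
          have hmaxex : ∃ w' ∈ W, ∀ w'' ∈ W, wordLE w' w'' → w'' = w' := by
            by_contra hno
            push_neg at hno
            have hsucc : ∀ v ∈ W, ∃ v' ∈ W, wordLE v v' ∧ v ≠ v' := by
              intro v hv
              obtain ⟨v', hv', hle, hne⟩ := hno v hv
              exact ⟨v', hv', hle, fun h => hne h.symm⟩
            obtain ⟨S, hSW, hcomp, hlen⟩ := exists_word_chain hwW hsucc
            have : P2ofB i φ (m, n, (none : Lt)) ∈ C :=
              hcond.2.2 m n q S (fun w' hw' => (hSW hw').1) hcomp hlen
            exact hup ⟨m, n, this, p2le_ofBsq bsq_tonone⟩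
          obtain ⟨w', hw'W, hw'max⟩ := hmaxex
          have hzw : P2le i φ f (P2ofB i φ (m, n, (some (q, Sum.inr w) : Lt)))
              (P2ofB i φ (m, n, (some (q, Sum.inr w') : Lt))) :=
            p2le_fiber (by simpa [Mle] using hw'W.2)
          refine ⟨_, hw'W.1, hzw, Or.inr ⟨hw'W.1, ?_, ?_, ?_⟩⟩
          · intro y hy hley
            rcases p2le_some_inv hley with ⟨y', rfl, hmy⟩ | rfl | ⟨w₁, w'', hx, -, hww, rfl⟩ |
              ⟨j', K, hx, -, -, rfl⟩ | ⟨j', s, K, hx, -, -, rfl⟩ | rfl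
            · obtain ⟨w'', rfl⟩ : ∃ w'', y' = Sum.inr w'' := by
                rcases y' with j'' | w''
                · exact absurd hmy mle_inr_inl
                · exact ⟨w'', rfl⟩
              have : w'' ∈ W := ⟨hy, wordLE_trans hw'W.2 (by simpa [Mle] using hmy)⟩
              rw [hw'max w'' this (by simpa [Mle] using hmy)]
            · exact absurd ⟨m, n, hy, p2le_trans hzw hley⟩ hup
            · exact absurd ⟨_, _, hy, p2le_trans hzw hley⟩ hup
            · simp at hx
            · simp at hx
            · exact absurd hy htop
          · intro m' n'; simp [P2ofB]
          · simp [P2top, P2ofB]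
  · exact absurd (top_of_inr_inr ▸ hz) htop

end Structure

section InfHelpers

lemma unbdd_infinite {S : Set ℕ} (h : Unbdd S) : S.Infinite := by
  intro hfin
  obtain ⟨B, hB⟩ := hfin.bddAbove
  obtain ⟨j, hj, hjB⟩ := h (B + 1)
  exact absurd (hB hj) (by omega)

lemma infinite_unbdd {S : Set ℕ} (h : S.Infinite) : Unbdd S := by
  intro L
  by_contra hc
  push_neg at hc
  exact h ((Set.finite_Iio L).subset (fun j hj => hc j hj))

lemma lenunbdd_infinite {S : Set NWord} (h : ∀ L, ∃ w ∈ S, L ≤ w.1.length) : S.Infinite := by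
  intro hfin
  obtain ⟨B, hB⟩ := (hfin.image (fun w : NWord => w.1.length)).bddAbove
  obtain ⟨w, hw, hwB⟩ := h (B + 1)
  have := hB (Set.mem_image_of_mem _ hw)
  replace this : w.1.length ≤ B := this
  omega

end InfHelpers

/-! ### The combinatorial closure operators on `none`-elements -/

/-- `edgeR t s` : `s` is a member of one of the accumulation families of `t`. -/
def edgeR (f : Pairt → NWord → ℕ) (t s : ℕ × ℕ) : Prop :=
  (∃ q w', t.1 = q.1.1 ∧ s = (f q w', t.2 + 1)) ∨
  (∃ q K, t.1 = q.1.2 ∧ s = (f q (word1 K), t.2 + 1)) ∨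
  (∃ q s₀ K, t.1 = f q s₀ ∧ s = (f q (wordSnoc s₀ K), t.2))

/-- Forward closure of `{t₂}` under families, within `N`. -/
inductive Rem (f : Pairt → NWord → ℕ) (N : Set (ℕ × ℕ)) (t₂ : ℕ × ℕ) : ℕ × ℕ → Prop
  | base : Rem f N t₂ t₂
  | step {t s : ℕ × ℕ} : Rem f N t₂ t → edgeR f t s → s ∈ N → Rem f N t₂ s

/-- Accumulation closure of the forward closure. -/
inductive Astar (f : Pairt → NWord → ℕ) (N : Set (ℕ × ℕ)) (t₂ : ℕ × ℕ) : ℕ × ℕ → Prop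
  | ofRem {t : ℕ × ℕ} : Rem f N t₂ t → Astar f N t₂ t
  | ruleW (q : Pairt) (n : ℕ) (S : Set NWord) (F : NWord → NWord) :
      (∀ v ∈ S, ∀ w ∈ S, wordLE v w ∨ wordLE w v) →
      (∀ L, ∃ w ∈ S, L ≤ w.1.length) →
      (∀ w ∈ S, wordLE w (F w)) →
      (∀ w ∈ S, Astar f N t₂ (f q (F w), n + 1)) →
      Astar f N t₂ (q.1.1, n)
  | ruleI3 (q : Pairt) (n : ℕ) (G : ℕ → ℕ) :
      (∀ L, L ≤ G L) →
      (∀ L, Astar f N t₂ (f q (word1 (G L)), n + 1)) →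
      Astar f N t₂ (q.1.2, n)
  | ruleI4 (q : Pairt) (n : ℕ) (s₀ : NWord) (G : ℕ → ℕ) :
      (∀ L, L ≤ G L) →
      (∀ L, Astar f N t₂ (f q (wordSnoc s₀ (G L)), n)) →
      Astar f N t₂ (f q s₀, n)

section Comb

variable {i : Pairt → Set ℕ} {φ : ℕ → Pairt} {f : Pairt → NWord → ℕ}

lemma rem_sub {N : Set (ℕ × ℕ)} {t₂ : ℕ × ℕ} (ht₂ : t₂ ∈ N) :
    ∀ x, Rem f N t₂ x → x ∈ N := by
  intro x hx
  induction hx with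
  | base => exact ht₂
  | step _ _ hs => exact hs

lemma astar_sub_N (hif : IFData i f) (hφ : Function.Bijective φ) {C : Set (P2t i φ)}
    (hcl : ScottClosed' (P2le i φ f) C) {t₂ : ℕ × ℕ} (ht₂ : t₂ ∈ NSet i φ C) :
    ∀ x, Astar f (NSet i φ C) t₂ x → x ∈ NSet i φ C := by
  intro x hx
  induction hx with
  | ofRem h => exact rem_sub ht₂ _ h
  | ruleW q n S F hcomp hlen hext _ ih =>
    have hmem : ∀ w ∈ S, P2ofB i φ (q.1.1, n, (some (q, Sum.inr w) : Lt)) ∈ C := by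
      intro w hw
      exact hcl.1 _ _ (p2le_ofBsq (bsq_sq2' (hext w hw))) (ih w hw)
    exact (cond_of_closed hif hφ hcl).2.2 q.1.1 n q S hmem hcomp hlen
  | ruleI3 q n G hG _ ih =>
    have hmem : ∀ L, P2ofB i φ (q.1.2, n, (some (q, Sum.inl (G L)) : Lt)) ∈ C := by
      intro L
      exact hcl.1 _ _ (p2le_ofBsq (bsq_sq3' le_rfl)) (ih L)
    have hunb : Unbdd {j | P2ofB i φ (q.1.2, n, (some (q, Sum.inl j) : Lt)) ∈ C} :=
      fun L => ⟨G L, hmem L, hG L⟩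
    exact (cond_of_closed hif hφ hcl).2.1 _ n q hunb
  | ruleI4 q n s₀ G hG _ ih =>
    have hmem : ∀ L, P2ofB i φ (f q s₀, n, (some (q, Sum.inl (G L)) : Lt)) ∈ C := by
      intro L
      exact hcl.1 _ _ (p2le_ofBsq (bsq_sq4' le_rfl)) (ih L)
    have hunb : Unbdd {j | P2ofB i φ (f q s₀, n, (some (q, Sum.inl j) : Lt)) ∈ C} :=
      fun L => ⟨G L, hmem L, hG L⟩
    exact (cond_of_closed hif hφ hcl).2.1 _ n q hunb

end Comb

section Gamma

variable {i : Pairt → Set ℕ} {φ : ℕ → Pairt} {f : Pairt → NWord → ℕ}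

lemma NQfin (hif : IFData i f) (hφ : Function.Bijective φ) {C : Set (P2t i φ)}
    (hcl : ScottClosed' (P2le i φ f) C) (htop : P2top i φ ∉ C) (k : ℕ) :
    {q : Pairt | ∃ c ∈ i q, (c, k) ∈ NSet i φ C}.Finite := by
  classical
  by_contra hinf
  have hpre : (φ ⁻¹' {q : Pairt | ∃ c ∈ i q, (c, k) ∈ NSet i φ C}).Infinite :=
    Set.Infinite.preimage hinf (fun x _ => hφ.2 x)
  have hM : Unbdd (φ ⁻¹' {q : Pairt | ∃ c ∈ i q, (c, k) ∈ NSet i φ C}) :=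
    infinite_unbdd hpre
  set g : ℕ → ℕ := fun m =>
    if h : ∃ c, c ∈ i (φ m) ∧ (c, k) ∈ NSet i φ C then h.choose else f (φ m) (word1 0)
    with hgdef
  have hg : ∀ m, g m ∈ i (φ m) := by
    intro m
    rw [hgdef]
    dsimp only
    split
    · next h => exact h.choose_spec.1
    · exact hif.mem _ _
  set G : Xt i φ := ⟨g, hg⟩ with hGdef
  have hcol : ∀ j, Sum.inl (G, j, k) ∈ C := by
    intro j
    obtain ⟨m, hm, hjm⟩ := hM j
    obtain ⟨c, hc, hck⟩ := hm
    have hex : ∃ c, c ∈ i (φ m) ∧ (c, k) ∈ NSet i φ C := ⟨c, hc, hck⟩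
    have hgm : (g m, k) ∈ NSet i φ C := by
      rw [hgdef]
      dsimp only
      rw [dif_pos hex]
      exact hex.choose_spec.2
    have hle : P2le i φ f (Sum.inl (G, j, k)) (P2ofB i φ (G.1 m, k, (none : Lt))) :=
      p2le_X_none hjm
    exact hcl.1 _ _ hle hgm
  have hunb : Unbdd {n | Sum.inl (G, n, k) ∈ C} := fun L => ⟨L, hcol L, le_rfl⟩
  exact htop ((cond_of_closed hif hφ hcl).1 G k hunb)

end Gamma

section Descent

variable {i : Pairt → Set ℕ} {φ : ℕ → Pairt} {f : Pairt → NWord → ℕ}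

lemma edge_level {t s : ℕ × ℕ} (h : edgeR f t s) : s.2 = t.2 + 1 ∨ s.2 = t.2 := by
  rcases h with ⟨q, w', -, rfl⟩ | ⟨q, K, -, rfl⟩ | ⟨q, s₀, K, -, rfl⟩ <;> simp

lemma rem_level {N : Set (ℕ × ℕ)} {t₂ : ℕ × ℕ} : ∀ x, Rem f N t₂ x → t₂.2 ≤ x.2 := by
  intro x hx
  induction hx with
  | base => exact le_rfl
  | step _ he _ ih => rcases edge_level he with h | h <;> omega

lemma astar_descent (hif : IFData i f) (hφ : Function.Bijective φ) {C : Set (P2t i φ)}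
    (hcl : ScottClosed' (P2le i φ f) C) (htop : P2top i φ ∉ C) {t₂ : ℕ × ℕ}
    (ht₂ : t₂ ∈ NSet i φ C) :
    ∀ x, Astar f (NSet i φ C) t₂ x →
      t₂.2 ≤ x.2 ∨ (x.2 + 1 = t₂.2 ∧
        ∃ q : Pairt, (∃ c ∈ i q, (c, t₂.2) ∈ NSet i φ C) ∧ (x.1 = q.1.1 ∨ x.1 = q.1.2)) := by
  have hQfin := NQfin hif hφ hcl htop t₂.2
  set T : Set ℕ := {a | ∃ q : Pairt,
    (∃ c ∈ i q, (c, t₂.2) ∈ NSet i φ C) ∧ (a = q.1.1 ∨ a = q.1.2)} with hTdef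
  have hTfin : T.Finite := by
    have h1 := hQfin.image (fun q : Pairt => q.1.1)
    have h2 := hQfin.image (fun q : Pairt => q.1.2)
    refine (h1.union h2).subset ?_
    rintro a ⟨q, hq, rfl | rfl⟩
    · exact Or.inl ⟨q, hq, rfl⟩
    · exact Or.inr ⟨q, hq, rfl⟩
  intro x hx
  induction hx with
  | ofRem h => exact Or.inl (rem_level _ h)
  | ruleW q n S F hcomp hlen hext hA ih =>
    rcases Nat.lt_trichotomy (n + 1) t₂.2 with hlt | heq | hgt
    · exfalso
      obtain ⟨w₀, hw₀, -⟩ := hlen 0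
      rcases ih w₀ hw₀ with h | ⟨hh, -⟩
      · omega
      · have hsub : (fun w => f q w) '' (F '' S) ⊆ T := by
          rintro a ⟨w', ⟨w, hw, rfl⟩, rfl⟩
          rcases ih w hw with h | ⟨-, q', hq', hco⟩
          · omega
          · exact ⟨q', hq', hco⟩
        have hinf : (F '' S).Infinite := by
          refine lenunbdd_infinite (fun L => ?_)
          obtain ⟨w, hw, hwL⟩ := hlen L
          exact ⟨F w, Set.mem_image_of_mem _ hw,
            le_trans hwL (wordLE_length (hext w hw))⟩
        exact (hinf.image ((hif.finj q).injOn)) (hTfin.subset hsub)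
    · refine Or.inr ⟨by simpa using heq, ?_⟩
      obtain ⟨w₀, hw₀, -⟩ := hlen 0
      have hN := astar_sub_N hif hφ hcl ht₂ _ (hA w₀ hw₀)
      rw [heq] at hN
      exact ⟨q, ⟨f q (F w₀), hif.mem _ _, hN⟩, Or.inl rfl⟩
    · exact Or.inl (by simp; omega)
  | ruleI3 q n G hG hA ih =>
    rcases Nat.lt_trichotomy (n + 1) t₂.2 with hlt | heq | hgt
    · exfalso
      rcases ih 0 with h | ⟨hh, -⟩
      · omega
      · have hsub : (fun K => f q (word1 K)) '' Set.range G ⊆ T := by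
          rintro a ⟨K, ⟨L, rfl⟩, rfl⟩
          rcases ih L with h | ⟨-, q', hq', hco⟩
          · omega
          · exact ⟨q', hq', hco⟩
        have hinf : (Set.range G).Infinite :=
          unbdd_infinite (fun L => ⟨G L, ⟨L, rfl⟩, hG L⟩)
        refine (hinf.image ?_) (hTfin.subset hsub)
        intro a _ b _ hab
        exact word1_inj (hif.finj q hab)
    · refine Or.inr ⟨by simpa using heq, ?_⟩
      have hN := astar_sub_N hif hφ hcl ht₂ _ (hA 0)
      rw [heq] at hN
      exact ⟨q, ⟨f q (word1 (G 0)), hif.mem _ _, hN⟩, Or.inr rfl⟩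
    · exact Or.inl (by simp; omega)
  | ruleI4 q n s₀ G hG hA ih =>
    rcases Nat.lt_or_ge n t₂.2 with hlt | hge
    · exfalso
      rcases ih 0 with h | ⟨hh, -⟩
      · omega
      · have hsub : (fun K => f q (wordSnoc s₀ K)) '' Set.range G ⊆ T := by
          rintro a ⟨K, ⟨L, rfl⟩, rfl⟩
          rcases ih L with h | ⟨-, q', hq', hco⟩
          · omega
          · exact ⟨q', hq', hco⟩
        have hinf : (Set.range G).Infinite :=
          unbdd_infinite (fun L => ⟨G L, ⟨L, rfl⟩, hG L⟩)
        refine (hinf.image ?_) (hTfin.subset hsub)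
        intro a _ b _ hab
        exact wordSnoc_inj_right (hif.finj q hab)
    · exact Or.inl (by simpa using hge)

end Descent

section Bounds

variable {i : Pairt → Set ℕ} {φ : ℕ → Pairt} {f : Pairt → NWord → ℕ}

lemma wordLE_word1 {v : NWord} {K : ℕ} (h : wordLE v (word1 K)) : v = word1 K := by
  have h1 := wordLE_length h
  have h2 := word_length_pos v
  exact Subtype.ext (h.eq_of_length (by simp [word1] at h1 ⊢; omega))

lemma rem_of_edges_single {N : Set (ℕ × ℕ)} {t₂ : ℕ × ℕ}
    (h : ∀ s, edgeR f t₂ s → s ∈ N → s = t₂) : ∀ x, Rem f N t₂ x → x = t₂ := by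
  intro x hx
  induction hx with
  | base => rfl
  | step _ he hs ih =>
    subst ih
    exact h _ he hs

lemma astar_singleton (hif : IFData i f) {N : Set (ℕ × ℕ)} {t₂ : ℕ × ℕ}
    (hrem : ∀ x, Rem f N t₂ x → x = t₂) : ∀ x, Astar f N t₂ x → x = t₂ := by
  intro x hx
  induction hx with
  | ofRem h => exact hrem _ h
  | ruleW q n S F hcomp hlen hext hA ih =>
    exfalso
    obtain ⟨w₁, hw₁, -⟩ := hlen 0
    obtain ⟨w₂, hw₂, hlen₂⟩ := hlen ((F w₁).1.length + 1)
    have h1 : f q (F w₁) = t₂.1 := congrArg Prod.fst (ih w₁ hw₁)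
    have h2 : f q (F w₂) = t₂.1 := congrArg Prod.fst (ih w₂ hw₂)
    have hFF : F w₁ = F w₂ := hif.finj q (h1.trans h2.symm)
    have hl3 := wordLE_length (hext w₂ hw₂)
    rw [hFF] at hlen₂
    omega
  | ruleI3 q n G hG hA ih =>
    exfalso
    have h1 : f q (word1 (G 0)) = t₂.1 := congrArg Prod.fst (ih 0)
    have h2 : f q (word1 (G (G 0 + 1))) = t₂.1 := congrArg Prod.fst (ih (G 0 + 1))
    have := word1_inj (hif.finj q (h1.trans h2.symm))
    have := hG (G 0 + 1)
    omega
  | ruleI4 q n s₀ G hG hA ih =>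
    exfalso
    have h1 : f q (wordSnoc s₀ (G 0)) = t₂.1 := congrArg Prod.fst (ih 0)
    have h2 : f q (wordSnoc s₀ (G (G 0 + 1))) = t₂.1 := congrArg Prod.fst (ih (G 0 + 1))
    have := wordSnoc_inj_right (hif.finj q (h1.trans h2.symm))
    have := hG (G 0 + 1)
    omega

lemma astar_two_level (hif : IFData i f) {N : Set (ℕ × ℕ)} {k : ℕ}
    (hlev : ∀ t ∈ N, t.2 = k ∨ t.2 = k + 1) (q₂ : Pairt) (s₂ : NWord) :
    ∀ x, Astar f N (f q₂ s₂, k + 1) x →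
      (∃ w, wordLE s₂ w ∧ x = (f q₂ w, k + 1)) ∨ x = (q₂.1.1, k) := by
  have hrem : ∀ x, Rem f N (f q₂ s₂, k + 1) x →
      ∃ w, wordLE s₂ w ∧ x = (f q₂ w, k + 1) := by
    intro x hx
    induction hx with
    | base => exact ⟨s₂, wordLE_refl _, rfl⟩
    | step _ he hs ih =>
      obtain ⟨w, hw, rfl⟩ := ih
      rcases he with ⟨q, w', -, rfl⟩ | ⟨q, K, -, rfl⟩ | ⟨q, s₀, K, hco, rfl⟩
      · exfalso; rcases hlev _ hs with h | h <;> simp at h <;> omega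
      · exfalso; rcases hlev _ hs with h | h <;> simp at h <;> omega
      · obtain ⟨hq, hs'⟩ := hif.f_inj2 hco
        exact ⟨wordSnoc w K, wordLE_trans hw (wordLE_snoc _ _), by rw [← hq, ← hs']⟩
  intro x hx
  induction hx with
  | ofRem h => exact Or.inl (hrem _ h)
  | ruleW q n S F hcomp hlen hext hA ih =>
    have hcase : ∀ w ∈ S, (q = q₂ ∧ n = k) ∨ f q (F w) = q₂.1.1 ∧ n + 1 = k := by
      intro w hw
      rcases ih w hw with ⟨w', hle', heq⟩ | heq
      · simp only [Prod.mk.injEq] at heq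
        obtain ⟨rfl, -⟩ := hif.f_inj2 heq.1
        exact Or.inl ⟨rfl, by omega⟩
      · simp only [Prod.mk.injEq] at heq
        exact Or.inr ⟨heq.1, by omega⟩
    obtain ⟨w₁, hw₁, -⟩ := hlen 0
    rcases hcase w₁ hw₁ with ⟨rfl, rfl⟩ | ⟨heq₁, hn₁⟩
    · exact Or.inr rfl
    · obtain ⟨w₂, hw₂, hlen₂⟩ := hlen ((F w₁).1.length + 1)
      rcases hcase w₂ hw₂ with ⟨rfl, rfl⟩ | ⟨heq₂, -⟩
      · exact Or.inr rfl
      · exfalso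
        have hFF : F w₁ = F w₂ := hif.finj q (heq₁.trans heq₂.symm)
        have hl3 := wordLE_length (hext w₂ hw₂)
        rw [hFF] at hlen₂
        omega
  | ruleI3 q n G hG hA ih =>
    exfalso
    have hK : ∀ L, s₂ = word1 (G L) ∨ f q (word1 (G L)) = q₂.1.1 := by
      intro L
      rcases ih L with ⟨w', hle', heq⟩ | heq
      · simp only [Prod.mk.injEq] at heq
        obtain ⟨rfl, rfl⟩ := hif.f_inj2 heq.1
        exact Or.inl ((wordLE_word1 hle').symm ▸ rfl)
      · simp only [Prod.mk.injEq] at heq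
        exact Or.inr heq.1
    have hd₁ : G 0 < G (G 0 + 1) := lt_of_lt_of_le (by omega) (hG _)
    have hd₂ : G (G 0 + 1) < G (G (G 0 + 1) + 1) := lt_of_lt_of_le (by omega) (hG _)
    rcases hK 0 with h1 | h1 <;> rcases hK (G 0 + 1) with h2 | h2 <;>
      rcases hK (G (G 0 + 1) + 1) with h3 | h3 <;>
    first
      | (have := word1_inj (h1.symm.trans h2); omega)
      | (have := word1_inj (h1.symm.trans h3); omega)
      | (have := word1_inj (h2.symm.trans h3); omega)
      | (have := word1_inj (hif.finj q (h1.trans h2.symm)); omega)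
      | (have := word1_inj (hif.finj q (h1.trans h3.symm)); omega)
      | (have := word1_inj (hif.finj q (h2.trans h3.symm)); omega)
  | ruleI4 q n s₀ G hG hA ih =>
    have hK : ∀ L, (q = q₂ ∧ wordLE s₂ (wordSnoc s₀ (G L)) ∧ n = k + 1) ∨
        f q (wordSnoc s₀ (G L)) = q₂.1.1 := by
      intro L
      rcases ih L with ⟨w', hle', heq⟩ | heq
      · simp only [Prod.mk.injEq] at heq
        obtain ⟨rfl, rfl⟩ := hif.f_inj2 heq.1
        exact Or.inl ⟨rfl, hle', heq.2⟩
      · simp only [Prod.mk.injEq] at heq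
        exact Or.inr heq.1
    have hd₁ : G 0 < G (G 0 + 1) := lt_of_lt_of_le (by omega) (hG _)
    have hd₂ : G (G 0 + 1) < G (G (G 0 + 1) + 1) := lt_of_lt_of_le (by omega) (hG _)
    have hconc : ∀ L L', G L ≠ G L' → (q = q₂ ∧ wordLE s₂ (wordSnoc s₀ (G L)) ∧ n = k + 1) →
        (q = q₂ ∧ wordLE s₂ (wordSnoc s₀ (G L')) ∧ n = k + 1) →
        (∃ w, wordLE s₂ w ∧ (f q s₀, n) = (f q₂ w, k + 1)) ∨ (f q s₀, n) = (q₂.1.1, k) := by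
      rintro L L' hne ⟨rfl, hle, rfl⟩ ⟨-, hle', -⟩
      exact Or.inl ⟨s₀, wordLE_of_le_snoc₂ hne hle hle', rfl⟩
    rcases hK 0 with h1 | h1 <;> rcases hK (G 0 + 1) with h2 | h2 <;>
      rcases hK (G (G 0 + 1) + 1) with h3 | h3 <;>
    first
      | (exact hconc _ _ (by omega) h1 h2)
      | (exact hconc _ _ (by omega) h1 h3)
      | (exact hconc _ _ (by omega) h2 h3)
      | (exact absurd (wordSnoc_inj_right (hif.finj q (h1.trans h2.symm))) (by omega))
      | (exact absurd (wordSnoc_inj_right (hif.finj q (h1.trans h3.symm))) (by omega))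
      | (exact absurd (wordSnoc_inj_right (hif.finj q (h2.trans h3.symm))) (by omega))

lemma astar_single_level (hif : IFData i f) (hφ : Function.Bijective φ) {C : Set (P2t i φ)}
    (hcl : ScottClosed' (P2le i φ f) C) {k : ℕ}
    (hlev : ∀ t ∈ NSet i φ C, t.2 = k) (q₂ : Pairt) (s₂ : NWord)
    (ht₂ : (f q₂ s₂, k) ∈ NSet i φ C) :
    ∀ x, Astar f (NSet i φ C) (f q₂ s₂, k) x →
      ∃ w, wordLE s₂ w ∧ x = (f q₂ w, k) := by
  have hrem : ∀ x, Rem f (NSet i φ C) (f q₂ s₂, k) x →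
      ∃ w, wordLE s₂ w ∧ x = (f q₂ w, k) := by
    intro x hx
    induction hx with
    | base => exact ⟨s₂, wordLE_refl _, rfl⟩
    | step _ he hs ih =>
      obtain ⟨w, hw, rfl⟩ := ih
      rcases he with ⟨q, w', -, rfl⟩ | ⟨q, K, -, rfl⟩ | ⟨q, s₀, K, hco, rfl⟩
      · exfalso; have := hlev _ hs; simp at this
      · exfalso; have := hlev _ hs; simp at this
      · obtain ⟨hq, hs'⟩ := hif.f_inj2 hco
        exact ⟨wordSnoc w K, wordLE_trans hw (wordLE_snoc _ _), by rw [← hq, ← hs']⟩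
  intro x hx
  induction hx with
  | ofRem h => exact hrem _ h
  | ruleW q n S F hcomp hlen hext hA ih =>
    exfalso
    have htarget : (q.1.1, n) ∈ NSet i φ C :=
      astar_sub_N hif hφ hcl ht₂ _ (Astar.ruleW q n S F hcomp hlen hext hA)
    have hn : n = k := hlev _ htarget
    obtain ⟨w₀, hw₀, -⟩ := hlen 0
    obtain ⟨w', -, heq⟩ := ih w₀ hw₀
    simp only [Prod.mk.injEq] at heq
    omega
  | ruleI3 q n G hG hA ih =>
    exfalso
    have htarget : (q.1.2, n) ∈ NSet i φ C :=
      astar_sub_N hif hφ hcl ht₂ _ (Astar.ruleI3 q n G hG hA)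
    have hn : n = k := hlev _ htarget
    obtain ⟨w', -, heq⟩ := ih 0
    simp only [Prod.mk.injEq] at heq
    omega
  | ruleI4 q n s₀ G hG hA ih =>
    have htarget : (f q s₀, n) ∈ NSet i φ C :=
      astar_sub_N hif hφ hcl ht₂ _ (Astar.ruleI4 q n s₀ G hG hA)
    have hn : n = k := hlev _ htarget
    obtain ⟨w₁, hle₁, heq₁⟩ := ih 0
    obtain ⟨w₂, hle₂, heq₂⟩ := ih (G 0 + 1)
    simp only [Prod.mk.injEq] at heq₁ heq₂
    obtain ⟨rfl, rfl⟩ := hif.f_inj2 heq₁.1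
    have h2 := (hif.f_inj2 heq₂.1).2
    have hGne : G 0 ≠ G (G 0 + 1) := by have := hG (G 0 + 1); omega
    refine ⟨s₀, ?_, by rw [hn]⟩
    exact wordLE_of_le_snoc₂ hGne hle₁ (h2 ▸ hle₂)

end Bounds

section LemmaG

variable {i : Pairt → Set ℕ} {φ : ℕ → Pairt} {f : Pairt → NWord → ℕ}

lemma lemmaG (hif : IFData i f) (hφ : Function.Bijective φ) {C : Set (P2t i φ)}
    (hcl : ScottClosed' (P2le i φ f) C) (htop : P2top i φ ∉ C) {ta tb : ℕ × ℕ}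
    (hta : ta ∈ NSet i φ C) (htb : tb ∈ NSet i φ C) (hne : ta ≠ tb) :
    ∃ t₂ ∈ NSet i φ C, ∃ t₁ ∈ NSet i φ C, ¬ Astar f (NSet i φ C) t₂ t₁ := by
  classical
  have hlevne : {n | ∃ m, (m, n) ∈ NSet i φ C}.Nonempty := ⟨ta.2, ta.1, by simpa using hta⟩
  set k := sInf {n | ∃ m, (m, n) ∈ NSet i φ C} with hkdef
  have hk : ∃ m, (m, k) ∈ NSet i φ C := Nat.sInf_mem hlevne
  have hmin : ∀ t ∈ NSet i φ C, k ≤ t.2 := fun t ht =>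
    Nat.sInf_le ⟨t.1, by simpa using ht⟩
  by_cases hhigh : ∃ t ∈ NSet i φ C, k + 2 ≤ t.2
  · obtain ⟨t₂, ht₂, hlev₂⟩ := hhigh
    obtain ⟨m₁, hm₁⟩ := hk
    refine ⟨t₂, ht₂, (m₁, k), hm₁, fun hA => ?_⟩
    rcases astar_descent hif hφ hcl htop ht₂ _ hA with h | ⟨h, -⟩
    · simp at h; omega
    · simp at h; omega
  · push_neg at hhigh
    have hlev : ∀ t ∈ NSet i φ C, t.2 = k ∨ t.2 = k + 1 := by
      intro t ht
      have h1 := hmin t ht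
      have h2 := hhigh t ht
      omega
    -- an element of N distinct from a given one
    have hother : ∀ t : ℕ × ℕ, ∃ t' ∈ NSet i φ C, t' ≠ t := by
      intro t
      by_cases h : ta = t
      · exact ⟨tb, htb, fun hh => hne (h.trans hh.symm)⟩
      · exact ⟨ta, hta, h⟩
    by_cases hk1 : ∃ t ∈ NSet i φ C, t.2 = k + 1
    · obtain ⟨⟨m₂, l₂⟩, ht₂, hl₂⟩ := hk1
      simp only at hl₂
      subst hl₂
      by_cases hcls : ∃ q s, m₂ = f q s
      · obtain ⟨q₂, s₂, rfl⟩ := hcls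
        by_cases hb : ∀ t ∈ NSet i φ C,
            (∃ w, wordLE s₂ w ∧ t = (f q₂ w, k + 1)) ∨ t = (q₂.1.1, k)
        · by_cases hex : ∃ x ∈ NSet i φ C, x.2 = k + 1 ∧ x ≠ (f q₂ s₂, k + 1)
          · obtain ⟨x, hx, hxl, hxne⟩ := hex
            obtain ⟨wₓ, hlex, rfl⟩ : ∃ w, wordLE s₂ w ∧ x = (f q₂ w, k + 1) := by
              rcases hb x hx with h | h
              · exact h
              · rw [h] at hxl; simp at hxl
            refine ⟨(f q₂ wₓ, k + 1), hx, (f q₂ s₂, k + 1), ht₂, fun hA => ?_⟩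
            rcases astar_two_level hif hlev q₂ wₓ _ hA with ⟨w', hle', heq⟩ | heq
            · simp only [Prod.mk.injEq] at heq
              have hw' : s₂ = w' := (hif.f_inj2 heq.1).2
              subst hw'
              exact hxne (by rw [wordLE_antisymm hlex hle'])
            · simp only [Prod.mk.injEq] at heq
              omega
          · push_neg at hex
            have hsingle : ∀ s, edgeR f (f q₂ s₂, k + 1) s → s ∈ NSet i φ C →
                s = (f q₂ s₂, k + 1) := by
              rintro s (⟨q, w', -, rfl⟩ | ⟨q, K, -, rfl⟩ | ⟨q, s₀, K, hco, rfl⟩) hs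
              · exfalso; rcases hlev _ hs with h | h <;> simp at h <;> omega
              · exfalso; rcases hlev _ hs with h | h <;> simp at h <;> omega
              · exact hex _ hs rfl
            obtain ⟨t', ht', ht'ne⟩ := hother (f q₂ s₂, k + 1)
            exact ⟨_, ht₂, t', ht', fun hA =>
              ht'ne (astar_singleton hif (rem_of_edges_single hsingle) _ hA)⟩
        · push_neg at hb
          obtain ⟨t₁, ht₁, hnb1, hnb2⟩ := hb
          refine ⟨_, ht₂, t₁, ht₁, fun hA => ?_⟩
          rcases astar_two_level hif hlev q₂ s₂ _ hA with ⟨w, hw, heq⟩ | heq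
          · exact hnb1 w hw heq
          · exact hnb2 heq
      · push_neg at hcls
        have hsingle : ∀ s, edgeR f (m₂, k + 1) s → s ∈ NSet i φ C → s = (m₂, k + 1) := by
          rintro s (⟨q, w', -, rfl⟩ | ⟨q, K, -, rfl⟩ | ⟨q, s₀, K, hco, rfl⟩) hs
          · exfalso; rcases hlev _ hs with h | h <;> simp at h <;> omega
          · exfalso; rcases hlev _ hs with h | h <;> simp at h <;> omega
          · exact absurd hco (hcls q s₀)
        obtain ⟨t', ht', ht'ne⟩ := hother (m₂, k + 1)
        exact ⟨_, ht₂, t', ht', fun hA =>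
          ht'ne (astar_singleton hif (rem_of_edges_single hsingle) _ hA)⟩
    · push_neg at hk1
      have hlevk : ∀ t ∈ NSet i φ C, t.2 = k := by
        intro t ht
        rcases hlev t ht with h | h
        · exact h
        · exact absurd h (hk1 t ht)
      obtain ⟨⟨ma, la⟩, rfl⟩ : ∃ p : ℕ × ℕ, p = ta := ⟨ta, rfl⟩
      have hla : la = k := hlevk _ hta
      subst hla
      by_cases hcls : ∃ q s, ma = f q s
      · obtain ⟨q₂, s₂, rfl⟩ := hcls
        by_cases hb : ∀ t ∈ NSet i φ C, ∃ w, wordLE s₂ w ∧ t = (f q₂ w, k)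
        · obtain ⟨wb, hleb, rfl⟩ := hb tb htb
          refine ⟨(f q₂ wb, k), htb, (f q₂ s₂, k), hta, fun hA => ?_⟩
          obtain ⟨w', hle', heq⟩ := astar_single_level hif hφ hcl hlevk q₂ wb htb _ hA
          simp only [Prod.mk.injEq] at heq
          have hw' : s₂ = w' := (hif.f_inj2 heq.1).2
          subst hw'
          exact hne (by rw [wordLE_antisymm hleb hle'])
        · push_neg at hb
          obtain ⟨t₁, ht₁, hnb⟩ := hb
          refine ⟨_, hta, t₁, ht₁, fun hA => ?_⟩
          obtain ⟨w, hw, heq⟩ := astar_single_level hif hφ hcl hlevk q₂ s₂ hta _ hA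
          exact hnb w hw heq
      · push_neg at hcls
        have hsingle : ∀ s, edgeR f (ma, k) s → s ∈ NSet i φ C → s = (ma, k) := by
          rintro s (⟨q, w', -, rfl⟩ | ⟨q, K, -, rfl⟩ | ⟨q, s₀, K, hco, rfl⟩) hs
          · exfalso; have := hlevk _ hs; simp at this
          · exfalso; have := hlevk _ hs; simp at this
          · exact absurd hco (hcls q s₀)
        refine ⟨_, hta, tb, htb, fun hA => ?_⟩
        exact hne.symm (astar_singleton hif (rem_of_edges_single hsingle) _ hA)

end LemmaG

section Covers

variable {i : Pairt → Set ℕ} {φ : ℕ → Pairt} {f : Pairt → NWord → ℕ}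

lemma unbdd_mono {S S' : Set ℕ} (h : Unbdd S) (hsub : S ⊆ S') : Unbdd S' := by
  intro L
  obtain ⟨j, hj, hjL⟩ := h L
  exact ⟨j, hsub hj, hjL⟩

/-- Down-closures of sets of maximal elements are Scott closed. -/
lemma mx_dset_closed (hif : IFData i f) (hφ : Function.Bijective φ) {C : Set (P2t i φ)}
    (hcl : ScottClosed' (P2le i φ f) C) (htop : P2top i φ ∉ C) {Gen : Set (P2t i φ)}
    (hGen : Gen ⊆ MxSet i φ f C) : ScottClosed' (P2le i φ f) (dSet i φ f Gen) := by
  have hsubC : dSet i φ f Gen ⊆ C :=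
    dSet_subset hcl.1 (fun x hx => (hGen hx).1)
  refine closed_of_cond hif hφ (fun x y h hy => dSet_lower h hy) ⟨?_, ?_, ?_⟩
  · intro g k hU
    exact absurd ((cond_of_closed hif hφ hcl).1 g k (unbdd_mono hU (fun j hj => hsubC hj)))
      htop
  · intro m n q hU
    exfalso
    have hNC : P2ofB i φ (m, n, (none : Lt)) ∈ C :=
      (cond_of_closed hif hφ hcl).2.1 m n q (unbdd_mono hU (fun j hj => hsubC hj))
    obtain ⟨j₀, hj₀, -⟩ := hU 0
    obtain ⟨c, hc, hle⟩ := hj₀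
    have hcmx := hGen hc
    rcases p2le_some_inv hle with ⟨y, rfl, -⟩ | rfl | ⟨w, w', -, -, -, rfl⟩ |
      ⟨j', K, -, -, -, rfl⟩ | ⟨j', s, K, -, -, -, rfl⟩ | rfl
    · exact hcmx.2.2.1 m n (hcmx.2.1 _ hNC (p2le_ofBsq bsq_tonone)).symm
    · exact hcmx.2.2.1 m n rfl
    · exact hcmx.2.2.1 _ _ rfl
    · exact hcmx.2.2.1 _ _ rfl
    · exact hcmx.2.2.1 _ _ rfl
    · exact hcmx.2.2.2 rfl
  · intro m n q S hmem hchain hlen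
    exfalso
    have hNC : P2ofB i φ (m, n, (none : Lt)) ∈ C :=
      (cond_of_closed hif hφ hcl).2.2 m n q S (fun w hw => hsubC (hmem w hw)) hchain hlen
    obtain ⟨w₀, hw₀, -⟩ := hlen 0
    obtain ⟨c, hc, hle⟩ := hmem w₀ hw₀
    have hcmx := hGen hc
    rcases p2le_some_inv hle with ⟨y, rfl, -⟩ | rfl | ⟨w, w', -, -, -, rfl⟩ |
      ⟨j', K, -, -, -, rfl⟩ | ⟨j', s, K, -, -, -, rfl⟩ | rfl
    · exact hcmx.2.2.1 m n (hcmx.2.1 _ hNC (p2le_ofBsq bsq_tonone)).symm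
    · exact hcmx.2.2.1 m n rfl
    · exact hcmx.2.2.1 _ _ rfl
    · exact hcmx.2.2.1 _ _ rfl
    · exact hcmx.2.2.1 _ _ rfl
    · exact hcmx.2.2.2 rfl

/-- Down-closure of a single `none`-element, when it is the only one. -/
lemma single_none_closed (hif : IFData i f) (hφ : Function.Bijective φ) {C : Set (P2t i φ)}
    (hcl : ScottClosed' (P2le i φ f) C) (htop : P2top i φ ∉ C) {t : ℕ × ℕ}
    (ht : t ∈ NSet i φ C) (huniq : ∀ t' ∈ NSet i φ C, t' = t) :
    ScottClosed' (P2le i φ f)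
      (dSet i φ f {P2ofB i φ (t.1, t.2, (none : Lt))}) := by
  have hsubC : dSet i φ f {P2ofB i φ (t.1, t.2, (none : Lt))} ⊆ C :=
    dSet_subset hcl.1 (by rintro x rfl; exact ht)
  refine closed_of_cond hif hφ (fun x y h hy => dSet_lower h hy) ⟨?_, ?_, ?_⟩
  · intro g k hU
    exact absurd ((cond_of_closed hif hφ hcl).1 g k (unbdd_mono hU (fun j hj => hsubC hj)))
      htop
  · intro m n q hU
    have hNC : (m, n) ∈ NSet i φ C :=
      (cond_of_closed hif hφ hcl).2.1 m n q (unbdd_mono hU (fun j hj => hsubC hj))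
    have := huniq _ hNC
    subst this
    exact mem_dSet_self rfl
  · intro m n q S hmem hchain hlen
    have hNC : (m, n) ∈ NSet i φ C :=
      (cond_of_closed hif hφ hcl).2.2 m n q S (fun w hw => hsubC (hmem w hw)) hchain hlen
    have := huniq _ hNC
    subst this
    exact mem_dSet_self rfl

end Covers

section Covers2

variable {i : Pairt → Set ℕ} {φ : ℕ → Pairt} {f : Pairt → NWord → ℕ}

/-- The `B`-side cover: down-closure of the `Astar`-closure. -/
lemma coverB_closed (hif : IFData i f) (hφ : Function.Bijective φ) {C : Set (P2t i φ)}
    (hcl : ScottClosed' (P2le i φ f) C) (htop : P2top i φ ∉ C) {t₂ : ℕ × ℕ}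
    (ht₂ : t₂ ∈ NSet i φ C) :
    ScottClosed' (P2le i φ f)
      (dSet i φ f {x | ∃ t, Astar f (NSet i φ C) t₂ t ∧
        x = P2ofB i φ (t.1, t.2, (none : Lt))}) := by
  classical
  set Gen : Set (P2t i φ) := {x | ∃ t, Astar f (NSet i φ C) t₂ t ∧
    x = P2ofB i φ (t.1, t.2, (none : Lt))} with hGdef
  have hsubC : dSet i φ f Gen ⊆ C := by
    refine dSet_subset hcl.1 ?_
    rintro x ⟨t, hA, rfl⟩
    exact astar_sub_N hif hφ hcl ht₂ _ hA
  have hgen : ∀ t, Astar f (NSet i φ C) t₂ t →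
      P2ofB i φ (t.1, t.2, (none : Lt)) ∈ dSet i φ f Gen :=
    fun t hA => mem_dSet_self ⟨t, hA, rfl⟩
  refine closed_of_cond hif hφ (fun x y h hy => dSet_lower h hy) ⟨?_, ?_, ?_⟩
  · intro g k hU
    exact absurd ((cond_of_closed hif hφ hcl).1 g k (unbdd_mono hU (fun j hj => hsubC hj)))
      htop
  · intro m n q hU
    by_cases hself : Astar f (NSet i φ C) t₂ (m, n)
    · exact hgen (m, n) hself
    · have key : ∀ j, P2ofB i φ (m, n, (some (q, Sum.inl j) : Lt)) ∈ dSet i φ f Gen →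
          (∃ K, j ≤ K ∧ m = q.1.2 ∧ Astar f (NSet i φ C) t₂ (f q (word1 K), n + 1)) ∨
          (∃ s K, j ≤ K ∧ m = f q s ∧
            Astar f (NSet i φ C) t₂ (f q (wordSnoc s K), n)) := by
        intro j hj
        obtain ⟨c, ⟨t, hA, rfl⟩, hle⟩ := hj
        rcases p2le_some_inv hle with ⟨y, he, -⟩ | he | ⟨w, w', hx, -, -, he⟩ |
          ⟨j', K, hx, hmb, hjK, he⟩ | ⟨j', s, K, hx, hms, hjK, he⟩ | he
        · exact absurd (pB_inj he) (by simp)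
        · have := pB_inj he
          simp only [Prod.mk.injEq] at this
          exact absurd (by rw [← this.1, ← this.2.1]; exact hA) hself
        · simp at hx
        · obtain rfl : j' = j := by simpa using hx.symm
          have h2 := pB_inj he
          simp only [Prod.mk.injEq] at h2
          exact Or.inl ⟨K, hjK, hmb, by rw [← h2.1, ← h2.2.1]; exact hA⟩
        · obtain rfl : j' = j := by simpa using hx.symm
          have h2 := pB_inj he
          simp only [Prod.mk.injEq] at h2
          exact Or.inr ⟨s, K, hjK, hms, by rw [← h2.1, ← h2.2.1]; exact hA⟩
        · simp [P2top, P2ofB] at he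
      obtain ⟨j₀, hj₀, -⟩ := hU 0
      rcases key j₀ hj₀ with ⟨K₀, -, hmb, -⟩ | ⟨s₀, K₀, -, hms, -⟩
      · -- rule I3
        have hforall : ∀ L, ∃ K, L ≤ K ∧
            Astar f (NSet i φ C) t₂ (f q (word1 K), n + 1) := by
          intro L
          obtain ⟨j, hj, hjL⟩ := hU L
          rcases key j hj with ⟨K, hjK, -, hA⟩ | ⟨s, K, -, hms', -⟩
          · exact ⟨K, by omega, hA⟩
          · exact absurd (hmb ▸ hms') (by have := hif.f_gt_b q s; omega)
        choose G hG1 hG2 using hforall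
        have := Astar.ruleI3 q n G hG1 hG2
        rw [← hmb] at this
        exact hgen (m, n) this
      · -- rule I4
        have hforall : ∀ L, ∃ K, L ≤ K ∧
            Astar f (NSet i φ C) t₂ (f q (wordSnoc s₀ K), n) := by
          intro L
          obtain ⟨j, hj, hjL⟩ := hU L
          rcases key j hj with ⟨K, hjK, hmb', -⟩ | ⟨s, K, hjK, hms', hA⟩
          · exact absurd (hmb' ▸ hms) (by have := hif.f_gt_b q s₀; omega)
          · obtain rfl : s = s₀ := hif.finj q (hms'.symm.trans hms)
            exact ⟨K, by omega, hA⟩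
        choose G hG1 hG2 using hforall
        have := Astar.ruleI4 q n s₀ G hG1 hG2
        rw [← hms] at this
        exact hgen (m, n) this
  · intro m n q S hmem hchain hlen
    by_cases hself : Astar f (NSet i φ C) t₂ (m, n)
    · exact hgen (m, n) hself
    · have key : ∀ w ∈ S, ∃ w', wordLE w w' ∧ m = q.1.1 ∧
          Astar f (NSet i φ C) t₂ (f q w', n + 1) := by
        intro w hw
        obtain ⟨c, ⟨t, hA, rfl⟩, hle⟩ := hmem w hw
        rcases p2le_some_inv hle with ⟨y, he, -⟩ | he | ⟨w₁, w', hx, hma, hww, he⟩ |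
          ⟨j', K, hx, -, -, he⟩ | ⟨j', s, K, hx, -, -, he⟩ | he
        · exact absurd (pB_inj he) (by simp)
        · have := pB_inj he
          simp only [Prod.mk.injEq] at this
          exact absurd (by rw [← this.1, ← this.2.1]; exact hA) hself
        · obtain rfl : w₁ = w := by simpa using hx.symm
          have h2 := pB_inj he
          simp only [Prod.mk.injEq] at h2
          exact ⟨w', hww, hma, by rw [← h2.1, ← h2.2.1]; exact hA⟩
        · simp at hx
        · simp at hx
        · simp [P2top, P2ofB] at he
      obtain ⟨w₀, hw₀, -⟩ := hlen 0
      obtain ⟨-, -, hma, -⟩ := key w₀ hw₀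
      choose F hF1 hF2 hF3 using key
      have : Astar f (NSet i φ C) t₂ (q.1.1, n) := by
        refine Astar.ruleW q n S (fun w => if h : w ∈ S then F w h else w) hchain hlen ?_ ?_
        · intro w hw
          show wordLE w (if h : w ∈ S then F w h else w)
          rw [dif_pos hw]
          exact hF1 w hw
        · intro w hw
          show Astar f (NSet i φ C) t₂ (f q (if h : w ∈ S then F w h else w), n + 1)
          rw [dif_pos hw]
          exact hF3 w hw
      rw [← hma] at this
      exact hgen (m, n) this

/-- The `A`-side cover: down-closure of the non-removed `none`-elements and
the maximal elements. -/
lemma coverA_closed (hif : IFData i f) (hφ : Function.Bijective φ) {C : Set (P2t i φ)}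
    (hcl : ScottClosed' (P2le i φ f) C) (htop : P2top i φ ∉ C) {t₂ : ℕ × ℕ} :
    ScottClosed' (P2le i φ f)
      (dSet i φ f ({x | ∃ t ∈ NSet i φ C, ¬ Rem f (NSet i φ C) t₂ t ∧
        x = P2ofB i φ (t.1, t.2, (none : Lt))} ∪ MxSet i φ f C)) := by
  classical
  set Gen : Set (P2t i φ) := {x | ∃ t ∈ NSet i φ C, ¬ Rem f (NSet i φ C) t₂ t ∧
    x = P2ofB i φ (t.1, t.2, (none : Lt))} ∪ MxSet i φ f C with hGdef
  have hsubC : dSet i φ f Gen ⊆ C := by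
    refine dSet_subset hcl.1 ?_
    rintro x (⟨t, ht, -, rfl⟩ | hmx)
    · exact ht
    · exact hmx.1
  refine closed_of_cond hif hφ (fun x y h hy => dSet_lower h hy) ⟨?_, ?_, ?_⟩
  · intro g k hU
    exact absurd ((cond_of_closed hif hφ hcl).1 g k (unbdd_mono hU (fun j hj => hsubC hj)))
      htop
  · intro m n q hU
    have hNC : (m, n) ∈ NSet i φ C :=
      (cond_of_closed hif hφ hcl).2.1 m n q (unbdd_mono hU (fun j hj => hsubC hj))
    by_cases hR : Rem f (NSet i φ C) t₂ (m, n)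
    · exfalso
      obtain ⟨j₀, hj₀, -⟩ := hU 0
      obtain ⟨c, hc, hle⟩ := hj₀
      rcases hc with ⟨t, ht, htR, rfl⟩ | hmx
      · rcases p2le_some_inv hle with ⟨y, he, -⟩ | he | ⟨w, w', hx, -, -, he⟩ |
          ⟨j', K, hx, hmb, hjK, he⟩ | ⟨j', s, K, hx, hms, hjK, he⟩ | he
        · exact absurd (pB_inj he) (by simp)
        · have h2 := pB_inj he
          simp only [Prod.mk.injEq] at h2
          have ht' : t = (m, n) := by rw [Prod.ext_iff]; exact ⟨h2.1, h2.2.1⟩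
          exact htR (ht'.symm ▸ hR)
        · simp at hx
        · have h2 := pB_inj he
          simp only [Prod.mk.injEq] at h2
          refine htR (Rem.step hR ?_ ht)
          exact Or.inr (Or.inl ⟨q, K, hmb, by
            rw [Prod.ext_iff]; exact ⟨h2.1, by simpa using h2.2.1⟩⟩)
        · have h2 := pB_inj he
          simp only [Prod.mk.injEq] at h2
          refine htR (Rem.step hR ?_ ht)
          exact Or.inr (Or.inr ⟨q, s, K, hms, by
            rw [Prod.ext_iff]; exact ⟨h2.1, by simpa using h2.2.1⟩⟩)
        · simp [P2top, P2ofB] at he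
      · rcases p2le_some_inv hle with ⟨y, rfl, -⟩ | rfl | ⟨w, w', -, -, -, rfl⟩ |
          ⟨j', K, -, -, -, rfl⟩ | ⟨j', s, K, -, -, -, rfl⟩ | rfl
        · exact hmx.2.2.1 m n (hmx.2.1 _ hNC (p2le_ofBsq bsq_tonone)).symm
        · exact hmx.2.2.1 m n rfl
        · exact hmx.2.2.1 _ _ rfl
        · exact hmx.2.2.1 _ _ rfl
        · exact hmx.2.2.1 _ _ rfl
        · exact hmx.2.2.2 rfl
    · exact mem_dSet_self (Or.inl ⟨(m, n), hNC, hR, rfl⟩)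
  · intro m n q S hmem hchain hlen
    have hNC : (m, n) ∈ NSet i φ C :=
      (cond_of_closed hif hφ hcl).2.2 m n q S (fun w hw => hsubC (hmem w hw)) hchain hlen
    by_cases hR : Rem f (NSet i φ C) t₂ (m, n)
    · exfalso
      obtain ⟨w₀, hw₀, -⟩ := hlen 0
      obtain ⟨c, hc, hle⟩ := hmem w₀ hw₀
      rcases hc with ⟨t, ht, htR, rfl⟩ | hmx
      · rcases p2le_some_inv hle with ⟨y, he, -⟩ | he | ⟨w₁, w', hx, hma, hww, he⟩ |
          ⟨j', K, hx, -, -, he⟩ | ⟨j', s, K, hx, -, -, he⟩ | he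
        · exact absurd (pB_inj he) (by simp)
        · have h2 := pB_inj he
          simp only [Prod.mk.injEq] at h2
          have ht' : t = (m, n) := by rw [Prod.ext_iff]; exact ⟨h2.1, h2.2.1⟩
          exact htR (ht'.symm ▸ hR)
        · have h2 := pB_inj he
          simp only [Prod.mk.injEq] at h2
          refine htR (Rem.step hR ?_ ht)
          exact Or.inl ⟨q, w', hma, by
            rw [Prod.ext_iff]; exact ⟨h2.1, by simpa using h2.2.1⟩⟩
        · simp at hx
        · simp at hx
        · simp [P2top, P2ofB] at he
      · rcases p2le_some_inv hle with ⟨y, rfl, -⟩ | rfl | ⟨w₁, w', -, -, -, rfl⟩ |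
          ⟨j', K, -, -, -, rfl⟩ | ⟨j', s, K, -, -, -, rfl⟩ | rfl
        · exact hmx.2.2.1 m n (hmx.2.1 _ hNC (p2le_ofBsq bsq_tonone)).symm
        · exact hmx.2.2.1 m n rfl
        · exact hmx.2.2.1 _ _ rfl
        · exact hmx.2.2.1 _ _ rfl
        · exact hmx.2.2.1 _ _ rfl
        · exact hmx.2.2.2 rfl
    · exact mem_dSet_self (Or.inl ⟨(m, n), hNC, hR, rfl⟩)

end Covers2

section Main

variable {i : Pairt → Set ℕ} {φ : ℕ → Pairt} {f : Pairt → NWord → ℕ}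

lemma main_existence (hif : IFData i f) (hφ : Function.Bijective φ) {C : Set (P2t i φ)}
    (hcl : ScottClosed' (P2le i φ f) C) (hne : C.Nonempty)
    (hirr : ∀ A B : Set (P2t i φ), ScottClosed' (P2le i φ f) A →
      ScottClosed' (P2le i φ f) B → C ⊆ A ∪ B → C ⊆ A ∨ C ⊆ B) :
    ∃ x, C = {y | P2le i φ f y x} := by
  classical
  by_cases htop : P2top i φ ∈ C
  · exact ⟨P2top i φ, Set.ext fun y =>
      ⟨fun _ => p2le_top y, fun _ => hcl.1 _ _ (p2le_top y) htop⟩⟩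
  by_cases hN2 : ∃ ta ∈ NSet i φ C, ∃ tb ∈ NSet i φ C, ta ≠ tb
  · exfalso
    obtain ⟨ta, hta, tb, htb, hnetab⟩ := hN2
    obtain ⟨t₂, ht₂, t₁, ht₁, hnA⟩ := lemmaG hif hφ hcl htop hta htb hnetab
    have hAcl := coverA_closed hif hφ hcl htop (t₂ := t₂)
    have hBcl := coverB_closed hif hφ hcl htop ht₂
    have hcover : C ⊆
        dSet i φ f ({x | ∃ t ∈ NSet i φ C, ¬ Rem f (NSet i φ C) t₂ t ∧
          x = P2ofB i φ (t.1, t.2, (none : Lt))} ∪ MxSet i φ f C) ∪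
        dSet i φ f {x | ∃ t, Astar f (NSet i φ C) t₂ t ∧
          x = P2ofB i φ (t.1, t.2, (none : Lt))} := by
      intro z hz
      obtain ⟨c, hc, hzc, hcase⟩ := struct_decomp hif hφ hcl htop hz
      rcases hcase with ⟨m', n', rfl⟩ | hmx
      · have hN' : ((m', n') : ℕ × ℕ) ∈ NSet i φ C := hc
        by_cases hR : Rem f (NSet i φ C) t₂ (m', n')
        · exact Or.inr ⟨_, ⟨(m', n'), Astar.ofRem hR, rfl⟩, hzc⟩
        · exact Or.inl ⟨_, Or.inl ⟨(m', n'), hN', hR, rfl⟩, hzc⟩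
      · exact Or.inl ⟨c, Or.inr hmx, hzc⟩
    rcases hirr _ _ hAcl hBcl hcover with hCA | hCB
    · have h1 := hCA (ht₂ : P2ofB i φ (t₂.1, t₂.2, (none : Lt)) ∈ C)
      obtain ⟨c, hc, hle⟩ := h1
      rcases p2le_noneB_inv hle with rfl | rfl
      · rcases hc with ⟨t, -, htR, he⟩ | hmx
        · have h2 := pB_inj he
          simp only [Prod.mk.injEq] at h2
          have ht' : t = t₂ := by rw [Prod.ext_iff]; exact ⟨h2.1.symm, h2.2.1.symm⟩
          exact htR (ht' ▸ Rem.base)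
        · exact hmx.2.2.1 t₂.1 t₂.2 rfl
      · rcases hc with ⟨t, -, -, he⟩ | hmx
        · exact absurd he (by simp [P2top, P2ofB])
        · exact hmx.2.2.2 rfl
    · have h1 := hCB (ht₁ : P2ofB i φ (t₁.1, t₁.2, (none : Lt)) ∈ C)
      obtain ⟨c, ⟨t, hA, rfl⟩, hle⟩ := h1
      rcases p2le_noneB_inv hle with he | he
      · have h2 := pB_inj he.symm
        simp only [Prod.mk.injEq] at h2
        have ht' : t = t₁ := by rw [Prod.ext_iff]; exact ⟨h2.1.symm, h2.2.1.symm⟩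
        exact hnA (ht' ▸ hA)
      · exact absurd he (by simp [P2top, P2ofB])
  by_cases hN1 : ∃ t, t ∈ NSet i φ C
  · obtain ⟨t, ht⟩ := hN1
    have huniq : ∀ t' ∈ NSet i φ C, t' = t := by
      intro t' ht'
      by_contra hne'
      exact hN2 ⟨t', ht', t, ht, hne'⟩
    have hAcl := single_none_closed hif hφ hcl htop ht huniq
    have hBcl := mx_dset_closed hif hφ hcl htop (Gen := MxSet i φ f C) (subset_refl _)
    have hcover : C ⊆ dSet i φ f {P2ofB i φ (t.1, t.2, (none : Lt))} ∪
        dSet i φ f (MxSet i φ f C) := by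
      intro z hz
      obtain ⟨c, hc, hzc, hcase⟩ := struct_decomp hif hφ hcl htop hz
      rcases hcase with ⟨m', n', rfl⟩ | hmx
      · have hN' : ((m', n') : ℕ × ℕ) ∈ NSet i φ C := hc
        have := huniq _ hN'
        subst this
        exact Or.inl ⟨_, rfl, hzc⟩
      · exact Or.inr ⟨c, hmx, hzc⟩
    rcases hirr _ _ hAcl hBcl hcover with hCA | hCB
    · refine ⟨P2ofB i φ (t.1, t.2, (none : Lt)), Set.ext fun y => ⟨fun hy => ?_, fun hy => ?_⟩⟩
      · obtain ⟨c, rfl, hle⟩ := hCA hy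
        exact hle
      · exact hcl.1 _ _ hy ht
    · exfalso
      obtain ⟨c, hcmx, hle⟩ := hCB (ht : P2ofB i φ (t.1, t.2, (none : Lt)) ∈ C)
      rcases p2le_noneB_inv hle with rfl | rfl
      · exact hcmx.2.2.1 t.1 t.2 rfl
      · exact hcmx.2.2.2 rfl
  · push_neg at hN1
    obtain ⟨z₀, hz₀⟩ := hne
    obtain ⟨c, hc, -, hcase⟩ := struct_decomp hif hφ hcl htop hz₀
    rcases hcase with ⟨m', n', rfl⟩ | hmx
    · exact absurd (hc : ((m', n') : ℕ × ℕ) ∈ NSet i φ C) (hN1 (m', n'))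
    · have hAcl := mx_dset_closed hif hφ hcl htop (Gen := {c})
        (by rintro x rfl; exact hmx)
      have hBcl := mx_dset_closed hif hφ hcl htop (Gen := MxSet i φ f C \ {c})
        Set.diff_subset
      have hcover : C ⊆ dSet i φ f {c} ∪ dSet i φ f (MxSet i φ f C \ {c}) := by
        intro z hz
        obtain ⟨c', hc', hzc', hcase'⟩ := struct_decomp hif hφ hcl htop hz
        rcases hcase' with ⟨m', n', rfl⟩ | hmx'
        · exact absurd (hc' : ((m', n') : ℕ × ℕ) ∈ NSet i φ C) (hN1 (m', n'))
        · by_cases hcc : c' = c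
          · exact Or.inl ⟨c, by rw [← hcc]; exact ⟨rfl, hzc'⟩⟩
          · exact Or.inr ⟨c', ⟨hmx', hcc⟩, hzc'⟩
      rcases hirr _ _ hAcl hBcl hcover with hCA | hCB
      · refine ⟨c, Set.ext fun y => ⟨fun hy => ?_, fun hy => ?_⟩⟩
        · obtain ⟨c', rfl, hle⟩ := hCA hy
          exact hle
        · exact hcl.1 _ _ hy hmx.1
      · exfalso
        obtain ⟨c', hc', hle⟩ := hCB hmx.1
        exact hc'.2 (hmx.2.1 c' hc'.1.1 hle ▸ rfl)

end Main

section T0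

variable {i : Pairt → Set ℕ} {φ : ℕ → Pairt} {f : Pairt → NWord → ℕ}

lemma downset_compl_open (z : P2t i φ) :
    ScottOpen' (P2le i φ f) {w | ¬ P2le i φ f w z} := by
  constructor
  · intro a b hab ha hb
    exact ha (p2le_trans hab hb)
  · intro D u hdir hlub hu
    by_contra hds
    have hall : ∀ d ∈ D, P2le i φ f d z := by
      intro d hd
      by_contra hc
      exact hds ⟨d, hd, hc⟩
    exact hu (hlub.2 z hall)

lemma p2_T0 (x y : P2t i φ)
    (h : ∀ U : Set (P2t i φ), ScottOpen' (P2le i φ f) U → (x ∈ U ↔ y ∈ U)) : x = y := by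
  have h1 := h _ (downset_compl_open (f := f) x)
  have h2 := h _ (downset_compl_open (f := f) y)
  have hyx : P2le i φ f y x := by
    by_contra hc
    exact (h1.2 hc) (p2le_refl x)
  have hxy : P2le i φ f x y := by
    by_contra hc
    exact (h2.1 hc) (p2le_refl y)
  exact p2le_antisymm hxy hyx

end T0

/-- The Scott space `ΣP₂` of the dcpo `P₂ = (X × ℕ × ℕ) ∪ B ∪ {⊤₂}` is sober. -/
theorem P2_scott_sober (i : Pairt → Set ℕ) (f : Pairt → NWord → ℕ) (φ : ℕ → Pairt)
    (hif : IFData i f) (hφ : Function.Bijective φ) :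
    SoberRel (P2le i φ f) := by
  classical
  constructor
  · exact fun x y h => p2_T0 x y h
  · intro C hcl hne hirr
    obtain ⟨x, hx⟩ := main_existence hif hφ hcl hne hirr
    refine ⟨x, hx, ?_⟩
    intro y hy
    have hxC : x ∈ C := by rw [hx]; exact p2le_refl x
    have hyC : y ∈ C := by rw [hy]; exact p2le_refl y
    rw [hy] at hxC
    rw [hx] at hyC
    exact p2le_antisymm hyC hxC
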